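/- arXiv:2301.04211 — 5 statements merged into one kernel-verified Lean document; each statement's English description precedes it below -/
import Mathlib

section
/- The family of Artin groups of type FC is uniformly small: for every non-decreasing divergent function f : ℕ → ℕ, the proportion of labellings in G^{N,f(N)} whose every three-vertex subgraph with all finite labels has a coefficient triple summing reciprocally to more than 1 tends to 0 as N → ∞. -/
open Filter Finset
open scoped Classical

/-- Defining pairs: unordered pairs of distinct vertices of `Fin N`. -/
abbrev DefPair (N : ℕ) := {p : Sym2 (Fin N) // ¬ p.IsDiag}

/-- Edge-labellings: labels are `Fin M`, representing the coefficient set `{∞, 2, 3, …, M}`: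
label `0` stands for `∞`, and label `j ≥ 1` stands for the finite coefficient `j + 1`. -/
abbrev Labelling (N M : ℕ) := DefPair N → Fin M

/-- The finite Artin coefficient represented by a non-`∞` label `j` is `j + 1`. -/
def coeff {M : ℕ} (j : Fin M) : ℕ := (j : ℕ) + 1

/-- A labelling is of type FC (at the level of triangles) if every three-vertex subgraph
with all three labels finite has coefficients whose reciprocals sum to more than `1`. -/
def IsFC {N M : ℕ} (Γ : Labelling N M) : Prop :=
  ∀ a b c : Fin N, a ≠ b → a ≠ c → b ≠ c →
    ∀ p q r : DefPair N, a ∈ p.1 → b ∈ p.1 → a ∈ q.1 → c ∈ q.1 → b ∈ r.1 → c ∈ r.1 →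
      (Γ p : ℕ) ≠ 0 → (Γ q : ℕ) ≠ 0 → (Γ r : ℕ) ≠ 0 →
        1 < (1 : ℝ) / coeff (Γ p) + 1 / coeff (Γ q) + 1 / coeff (Γ r)

namespace FCaux

/-- vertex `3k+i` of the `k`-th triangle -/
def vtx {N : ℕ} (k : Fin (N / 3)) (i : Fin 3) : Fin N :=
  ⟨3 * k + i, by have hk := k.2; have hi := i.2; omega⟩

def oA (j : Fin 3) : Fin 3 := if (j : ℕ) = 2 then 1 else 0
def oB (j : Fin 3) : Fin 3 := if (j : ℕ) = 0 then 1 else 2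

lemma vtx_inj {N : ℕ} {k k' : Fin (N/3)} {i i' : Fin 3} (h : vtx k i = vtx k' i') :
    k = k' ∧ i = i' := by
  have := congrArg Fin.val h
  simp only [vtx] at this
  have hk := k.2; have hk' := k'.2; have hi := i.2; have hi' := i'.2
  constructor <;> [skip; skip] <;> apply Fin.ext <;> omega

lemma oA_lt_oB (j : Fin 3) : (oA j : ℕ) < (oB j : ℕ) := by fin_cases j <;> decide

def edg {N : ℕ} (k : Fin (N / 3)) (j : Fin 3) : DefPair N :=
  ⟨s(vtx k (oA j), vtx k (oB j)), by
    rw [Sym2.mk_isDiag_iff]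
    intro h
    have h2 := (vtx_inj h).2
    have h3 := oA_lt_oB j
    rw [h2] at h3
    omega⟩

lemma edg_inj {N : ℕ} : Function.Injective (fun x : Fin (N/3) × Fin 3 => edg x.1 x.2) := by
  rintro ⟨k, j⟩ ⟨k', j'⟩ h
  simp only [edg, Subtype.mk.injEq, Sym2.eq_iff] at h
  rcases h with ⟨h1, h2⟩ | ⟨h1, h2⟩
  · obtain ⟨hk, hA⟩ := vtx_inj h1
    obtain ⟨_, hB⟩ := vtx_inj h2
    have : j = j' := by
      fin_cases j <;> fin_cases j' <;> simp_all [oA, oB]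
    simp [hk, this]
  · obtain ⟨hk, hA⟩ := vtx_inj h1
    obtain ⟨_, hB⟩ := vtx_inj h2
    exfalso
    fin_cases j <;> fin_cases j' <;> simp_all [oA, oB]

end FCaux

namespace FCaux

variable {N M : ℕ}

def Bad {M : ℕ} (h : Fin 3 → Fin M) : Prop := ∀ j, 2 ≤ (h j : ℕ)

def ed (N M : ℕ) : Fin (N/3) × Fin 3 → DefPair N := fun x => edg x.1 x.2

/-- the product-structure equivalence -/
noncomputable def E1 (N M : ℕ) :
    Labelling N M ≃ ((Fin (N/3) → Fin 3 → Fin M) × ({p : DefPair N // p ∉ Set.range (ed N M)} → Fin M)) :=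
  (Equiv.piEquivPiSubtypeProd (· ∈ Set.range (ed N M)) fun _ => Fin M).trans
    (Equiv.prodCongr
      (((Equiv.ofInjective (ed N M) edg_inj).symm.arrowCongr (Equiv.refl (Fin M))).trans
        (Equiv.curry _ _ _))
      (Equiv.refl _))

lemma E1_fst (Γ : Labelling N M) (k : Fin (N/3)) (j : Fin 3) :
    (E1 N M Γ).1 k j = Γ (edg k j) := rfl

lemma card_Q (N M : ℕ) :
    Fintype.card {Γ : Labelling N M // ∀ k : Fin (N/3), ¬ Bad (fun j => Γ (edg k j))}
      = (Fintype.card {h : Fin 3 → Fin M // ¬ Bad h}) ^ (N/3)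
        * M ^ (Fintype.card (DefPair N) - 3 * (N/3)) := by
  have e2 : {Γ : Labelling N M // ∀ k : Fin (N/3), ¬ Bad (fun j => Γ (edg k j))}
      ≃ {x : (Fin (N/3) → Fin 3 → Fin M) × ({p : DefPair N // p ∉ Set.range (ed N M)} → Fin M) //
          ∀ k, ¬ Bad (x.1 k)} :=
    (E1 N M).subtypeEquiv (fun Γ => by
      constructor <;> intro h k <;> have := h k <;> simpa [Bad, E1_fst] using this)
  have e3 : {x : (Fin (N/3) → Fin 3 → Fin M) × ({p : DefPair N // p ∉ Set.range (ed N M)} → Fin M) //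
          ∀ k, ¬ Bad (x.1 k)}
      ≃ {g : Fin (N/3) → Fin 3 → Fin M // ∀ k, ¬ Bad (g k)}
          × ({p : DefPair N // p ∉ Set.range (ed N M)} → Fin M) :=
    { toFun := fun x => (⟨x.1.1, x.2⟩, x.1.2)
      invFun := fun y => ⟨(y.1.1, y.2), y.1.2⟩
      left_inv := fun _ => rfl
      right_inv := fun _ => rfl }
  have e4 : {g : Fin (N/3) → Fin 3 → Fin M // ∀ k, ¬ Bad (g k)}
      ≃ ∀ _ : Fin (N/3), {h : Fin 3 → Fin M // ¬ Bad h} :=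
    Equiv.subtypePiEquivPi (p := fun _ h => ¬ Bad h)
  rw [Fintype.card_congr (e2.trans e3), Fintype.card_prod, Fintype.card_congr e4,
    Fintype.card_pi, Fintype.card_fun, Fintype.card_fin]
  have hrange : Fintype.card {p : DefPair N // p ∈ Set.range (ed N M)} = 3 * (N/3) := by
    rw [← Fintype.card_congr (Equiv.ofInjective (ed N M) edg_inj)]
    simp [mul_comm]
  have hcompl : Fintype.card {p : DefPair N // p ∉ Set.range (ed N M)}
      = Fintype.card (DefPair N) - 3*(N/3) := by
    rw [← hrange]; exact Fintype.card_subtype_compl _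
  rw [hcompl]
  simp [Finset.prod_const]

lemma card_notBad_le (hM : 3 ≤ M) :
    (Fintype.card {h : Fin 3 → Fin M // ¬ Bad h} : ℝ) ≤ (26/27 : ℝ) * M ^ 3 := by
  have hd : (M - 2) ^ 3 ≤ Fintype.card {h : Fin 3 → Fin M // Bad h} := by
    have e : {h : Fin 3 → Fin M // Bad h} ≃ ∀ _ : Fin 3, {b : Fin M // 2 ≤ (b : ℕ)} :=
      (Equiv.subtypeEquivRight (fun h => Iff.rfl)).trans
        (Equiv.subtypePiEquivPi (α := Fin 3) (β := fun _ => Fin M)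
          (p := fun _ b => 2 ≤ (b : ℕ)))
    rw [Fintype.card_congr e, Fintype.card_pi]
    have h1 : M - 2 ≤ Fintype.card {b : Fin M // 2 ≤ (b : ℕ)} := by
      have : Function.Injective (fun i : Fin (M - 2) =>
          (⟨⟨(i : ℕ) + 2, by have := i.2; omega⟩, by simp⟩ : {b : Fin M // 2 ≤ (b : ℕ)})) := by
        intro a b hab
        simp only [Subtype.mk.injEq, Fin.mk.injEq] at hab
        exact Fin.ext (by omega)
      simpa using Fintype.card_le_of_injective _ this
    calc (M-2)^3 ≤ (Fintype.card {b : Fin M // 2 ≤ (b : ℕ)})^3 := Nat.pow_le_pow_left h1 3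
      _ = ∏ _j : Fin 3, Fintype.card {b : Fin M // 2 ≤ (b : ℕ)} := by simp [pow_succ]
  have hc : Fintype.card {h : Fin 3 → Fin M // ¬ Bad h} ≤ M ^ 3 - (M - 2) ^ 3 := by
    rw [Fintype.card_subtype_compl, Fintype.card_fun]
    simp only [Fintype.card_fin]
    omega
  have hcast : ((M ^ 3 - (M - 2) ^ 3 : ℕ) : ℝ) = (M:ℝ)^3 - ((M:ℝ) - 2)^3 := by
    have h1 : (M - 2) ^ 3 ≤ M ^ 3 := Nat.pow_le_pow_left (by omega) 3
    push_cast [Nat.cast_sub h1, Nat.cast_sub (show 2 ≤ M by omega)]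
    ring
  have h2 : (Fintype.card {h : Fin 3 → Fin M // ¬ Bad h} : ℝ) ≤ (M:ℝ)^3 - ((M:ℝ) - 2)^3 := by
    rw [← hcast]; exact_mod_cast hc
  have hM' : (3:ℝ) ≤ (M:ℝ) := by exact_mod_cast hM
  nlinarith [sq_nonneg ((M:ℝ) - 3), sq_nonneg (M:ℝ), pow_le_pow_left₀ (by linarith : (0:ℝ) ≤ (M:ℝ)) (by linarith : (M:ℝ) ≤ 3*((M:ℝ)-2)) 3]

end FCaux

namespace FCaux

lemma FC_notBad {N M : ℕ} {Γ : Labelling N M} (h : IsFC Γ) (k : Fin (N/3)) :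
    ¬ Bad (fun j => Γ (edg k j)) := by
  intro hB
  have hB0 : 2 ≤ (Γ (edg k 0) : ℕ) := hB 0
  have hB1 : 2 ≤ (Γ (edg k 1) : ℕ) := hB 1
  have hB2 : 2 ≤ (Γ (edg k 2) : ℕ) := hB 2
  have habc : ∀ i i' : Fin 3, i ≠ i' → vtx k i ≠ vtx k i' := by
    intro i i' hii hv; exact hii (vtx_inj hv).2
  have hmemA : ∀ j, vtx k (oA j) ∈ (edg k j).1 := fun j => Sym2.mem_mk_left _ _
  have hmemB : ∀ j, vtx k (oB j) ∈ (edg k j).1 := fun j => Sym2.mem_mk_right _ _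
  have hos : oA 0 = 0 ∧ oB 0 = 1 ∧ oA 1 = 0 ∧ oB 1 = 2 ∧ oA 2 = 1 ∧ oB 2 = 2 := by decide
  obtain ⟨e1, e2, e3, e4, e5, e6⟩ := hos
  have key := h (vtx k 0) (vtx k 1) (vtx k 2)
    (habc _ _ (by decide)) (habc _ _ (by decide)) (habc _ _ (by decide))
    (edg k 0) (edg k 1) (edg k 2)
    (by have := hmemA 0; rwa [e1] at this)
    (by have := hmemB 0; rwa [e2] at this)
    (by have := hmemA 1; rwa [e3] at this)
    (by have := hmemB 1; rwa [e4] at this)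
    (by have := hmemA 2; rwa [e5] at this)
    (by have := hmemB 2; rwa [e6] at this)
    (by omega) (by omega) (by omega)
  have hb : ∀ p : DefPair N, 2 ≤ (Γ p : ℕ) → (1:ℝ)/coeff (Γ p) ≤ 1/3 := by
    intro p hp
    apply one_div_le_one_div_of_le (by norm_num)
    have : (3:ℕ) ≤ coeff (Γ p) := by unfold coeff; omega
    exact_mod_cast this
  have b0 := hb _ hB0
  have b1 := hb _ hB1
  have b2 := hb _ hB2
  linarith

lemma ratio_le (N M : ℕ) (hM : 3 ≤ M) :
    ((Finset.univ.filter fun Γ : Labelling N M => IsFC Γ).card : ℝ) /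
      (Fintype.card (Labelling N M) : ℝ) ≤ (26/27 : ℝ) ^ (N/3) := by
  set K := N / 3 with hK
  set E := Fintype.card (DefPair N) with hE
  set c := Fintype.card {h : Fin 3 → Fin M // ¬ Bad h} with hc
  have hMpos : (0:ℝ) < (M:ℝ) := by
    have : (0:ℕ) < M := by omega
    exact_mod_cast this
  have hcard_lab : Fintype.card (Labelling N M) = M ^ E := by
    rw [Fintype.card_fun, Fintype.card_fin]
  have h3K : 3 * K ≤ E := by
    have h1 := Fintype.card_le_of_injective _ (edg_inj (N := N))
    simpa [hE, hK, mul_comm] using h1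
  have hsub : ((Finset.univ.filter fun Γ : Labelling N M => IsFC Γ).card : ℕ)
      ≤ Fintype.card {Γ : Labelling N M // ∀ k : Fin (N/3), ¬ Bad (fun j => Γ (edg k j))} := by
    rw [Fintype.card_subtype]
    apply Finset.card_le_card
    intro Γ hΓ
    simp only [Finset.mem_filter, Finset.mem_univ, true_and] at *
    exact fun k => FC_notBad hΓ k
  have hQ := card_Q N M
  have hnum : ((Finset.univ.filter fun Γ : Labelling N M => IsFC Γ).card : ℝ)
      ≤ (c:ℝ) ^ K * (M:ℝ) ^ (E - 3*K) := by
    have := hsub.trans_eq hQ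
    calc ((Finset.univ.filter fun Γ : Labelling N M => IsFC Γ).card : ℝ)
        ≤ ((c ^ K * M ^ (E - 3*K) : ℕ) : ℝ) := by exact_mod_cast this
      _ = (c:ℝ) ^ K * (M:ℝ) ^ (E - 3*K) := by push_cast; ring
  have hME : (M:ℝ) ^ E = (M:ℝ) ^ (3*K) * (M:ℝ) ^ (E - 3*K) := by
    rw [← pow_add, Nat.add_sub_cancel' h3K]
  have hMEpos : (0:ℝ) < (M:ℝ) ^ E := by positivity
  have step1 : ((Finset.univ.filter fun Γ : Labelling N M => IsFC Γ).card : ℝ) /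
      (Fintype.card (Labelling N M) : ℝ) ≤ ((c:ℝ)/(M:ℝ)^3) ^ K := by
    rw [hcard_lab]
    have hEq : ((c:ℝ) ^ K * (M:ℝ) ^ (E - 3*K)) / (M:ℝ) ^ E = ((c:ℝ)/(M:ℝ)^3) ^ K := by
      rw [hME, div_pow, ← pow_mul]
      rw [mul_div_mul_right _ _ (by positivity : (M:ℝ) ^ (E - 3*K) ≠ 0)]
    calc ((Finset.univ.filter fun Γ : Labelling N M => IsFC Γ).card : ℝ) / ((M ^ E : ℕ) : ℝ)
        ≤ ((c:ℝ) ^ K * (M:ℝ) ^ (E - 3*K)) / ((M ^ E : ℕ):ℝ) := by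
          gcongr
      _ = ((c:ℝ)/(M:ℝ)^3) ^ K := by push_cast; rw [hEq]
  have hfrac : (c:ℝ)/(M:ℝ)^3 ≤ 26/27 := by
    rw [div_le_iff₀ (by positivity)]
    have := card_notBad_le (M := M) hM
    linarith [this]
  refine step1.trans ?_
  apply pow_le_pow_left₀ (by positivity) hfrac

end FCaux

/-- The family of Artin groups of type FC is uniformly small: for every non-decreasing
divergent `f`, the proportion of labellings in `𝒢^{N, f(N)}` of type FC tends to `0`. -/
theorem fc_uniformly_small (f : ℕ → ℕ) (hmono : Monotone f)
    (hdiv : Tendsto f atTop atTop) :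
    Tendsto (fun N =>
        ((Finset.univ.filter fun Γ : Labelling N (f N) => IsFC Γ).card : ℝ) /
          (Fintype.card (Labelling N (f N)) : ℝ)) atTop (nhds 0) := by
  have hub : ∀ᶠ N in atTop,
      ((Finset.univ.filter fun Γ : Labelling N (f N) => IsFC Γ).card : ℝ) /
        (Fintype.card (Labelling N (f N)) : ℝ) ≤ (26/27 : ℝ) ^ (N / 3) := by
    filter_upwards [hdiv.eventually_ge_atTop 3] with N hN
    exact FCaux.ratio_le N (f N) hN
  have hlb : ∀ᶠ N in atTop, (0:ℝ) ≤
      ((Finset.univ.filter fun Γ : Labelling N (f N) => IsFC Γ).card : ℝ) /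
        (Fintype.card (Labelling N (f N)) : ℝ) :=
    Eventually.of_forall fun N => by positivity
  have hg : Tendsto (fun N : ℕ => (26/27 : ℝ) ^ (N / 3)) atTop (nhds 0) :=
    (tendsto_pow_atTop_nhds_zero_of_lt_one (by norm_num) (by norm_num)).comp
      (tendsto_atTop_atTop.2 fun b => ⟨3 * b, fun n hn => by omega⟩)
  exact tendsto_of_tendsto_of_tendsto_of_le_of_le' tendsto_const_nhds hg hlb hub
end

section
/- For every label k and every non-decreasing divergent function f : ℕ → ℕ, the probability that a uniformly random labelling in G^{N,f(N)} decomposes as a k-join tends to 0 as N → ∞. Specifically, this probability is bounded above by Σ_{j=1}^{⌊N/2⌋} C(N,j) (1/f(N))^{j(N-j)}, which tends to 0. -/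
open Filter Finset
open scoped Classical

/-- `Γ` is a `k`-join: the vertices split into two nonempty parts such that every
pair with one vertex in each part carries the label (with index) `k`. -/
def IsJoin {N M : ℕ} (k : ℕ) (Γ : Labelling N M) : Prop :=
  ∃ S : Finset (Fin N), S.Nonempty ∧ Sᶜ.Nonempty ∧
    ∀ a b : Fin N, a ∈ S → b ∉ S →
      ∀ p : DefPair N, a ∈ p.1 → b ∈ p.1 → (Γ p : ℕ) = k

/-!
A `k`-join with parts `S`, `Sᶜ` can be presented with its smaller part, of size
`1 ≤ j ≤ N / 2`. Given that part, all `j (N - j)` crossing pairs are forced to carry the label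
`k`, which happens with probability at most `M ^ (-j (N - j))`; a union bound over the
`C(N, j)` choices of the part gives the stated sum. For `1 ≤ j ≤ N / 2` one has
`j (N - j) ≥ N - 1` and `C(N, j) ≤ 2 ^ N`, so once `f N ≥ 4` the sum is at most
`N 2 ^ N 4 ^ (1 - N) = 4 N 2 ^ (-N)`, which tends to `0`.
-/

lemma card_filter_forall_val_eq_le {α : Type*} [Fintype α] [DecidableEq α] (M k : ℕ)
    (A : Finset α) :
    #{g : α → Fin M | ∀ p ∈ A, (g p : ℕ) = k} ≤ M ^ (Fintype.card α - #A) := by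
  calc #{g : α → Fin M | ∀ p ∈ A, (g p : ℕ) = k}
      ≤ #(univ : Finset ({p // p ∉ A} → Fin M)) := by
        refine card_le_card_of_injOn (fun g q => g q) (fun _ _ => mem_univ _) ?_
        intro g₁ h₁ g₂ h₂ h
        simp only [mem_coe, mem_filter, mem_univ, true_and] at h₁ h₂
        funext p
        by_cases hp : p ∈ A
        · exact Fin.ext ((h₁ p hp).trans (h₂ p hp).symm)
        · exact congrFun h ⟨p, hp⟩
    _ = M ^ (Fintype.card α - #A) := by
        rw [card_univ, Fintype.card_fun, Fintype.card_fin, Fintype.card_subtype_compl,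
          Fintype.card_coe]

lemma card_filter_forall_val_eq_div_le {α : Type*} [Fintype α] [DecidableEq α] {M : ℕ}
    (hM : 0 < M) (k : ℕ) (A : Finset α) :
    (#{g : α → Fin M | ∀ p ∈ A, (g p : ℕ) = k} : ℝ) / Fintype.card (α → Fin M) ≤
      (1 / M) ^ #A := by
  rw [Fintype.card_fun, Fintype.card_fin, Nat.cast_pow, div_le_iff₀ (by positivity)]
  calc (#{g : α → Fin M | ∀ p ∈ A, (g p : ℕ) = k} : ℝ)
      ≤ (M : ℝ) ^ (Fintype.card α - #A) := by
        exact_mod_cast card_filter_forall_val_eq_le M k A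
    _ = (1 / M) ^ #A * M ^ Fintype.card α := by
        rw [pow_sub₀ _ (by positivity) (card_le_univ A), one_div, inv_pow, mul_comm]

lemma sum_filter_card_mem_eq_sum_choose {α β : Type*} [Fintype α] [AddCommMonoid β]
    (I : Finset ℕ) (g : ℕ → β) :
    ∑ S : Finset α with #S ∈ I, g #S = ∑ j ∈ I, (Fintype.card α).choose j • g j := by
  rw [← sum_fiberwise_of_maps_to (g := card) (t := I) fun S hS => (mem_filter.1 hS).2]
  refine sum_congr rfl fun j hj => ?_
  have fiber : ({S : Finset α | #S ∈ I} : Finset _).filter (#· = j) = powersetCard j univ := by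
    ext S
    simp only [mem_filter, mem_univ, true_and, mem_powersetCard_univ]
    exact ⟨And.right, fun h => ⟨h ▸ hj, h⟩⟩
  calc ∑ S ∈ {S : Finset α | #S ∈ I} with #S = j, g #S
      = ∑ _S ∈ powersetCard j (univ : Finset α), g j :=
        sum_congr fiber fun S hS => by rw [mem_powersetCard_univ.1 hS]
    _ = (Fintype.card α).choose j • g j := by
        rw [sum_const, card_powersetCard, card_univ]

lemma Nat.sub_one_le_mul_sub {n j : ℕ} (h1 : 1 ≤ j) (h2 : j < n) : n - 1 ≤ j * (n - j) := by
  obtain ⟨m, rfl⟩ := Nat.exists_eq_add_of_lt h2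
  rw [show j + m + 1 - j = m + 1 by omega, show j + m + 1 - 1 = j + m by omega]
  nlinarith

lemma choose_mul_pow_le {N j : ℕ} {x : ℝ} (hx₀ : 0 ≤ x) (hx₁ : x ≤ 1) (hj₁ : 1 ≤ j)
    (hjN : j < N) :
    (N.choose j : ℝ) * x ^ (j * (N - j)) ≤ 2 ^ N * x ^ (N - 1) := by
  have hchoose : (N.choose j : ℝ) ≤ 2 ^ N := by exact_mod_cast N.choose_le_two_pow j
  exact mul_le_mul hchoose (pow_le_pow_of_le_one hx₀ hx₁ (Nat.sub_one_le_mul_sub hj₁ hjN))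
    (by positivity) (by positivity)

def crossPairs {N : ℕ} (S : Finset (Fin N)) : Finset (DefPair N) :=
  {p | ∃ a ∈ S, ∃ b ∉ S, a ∈ p.1 ∧ b ∈ p.1}

lemma crossPairs_compl {N : ℕ} (S : Finset (Fin N)) : crossPairs Sᶜ = crossPairs S := by
  ext p
  simp only [crossPairs, mem_filter, mem_univ, true_and, mem_compl, not_not]
  exact ⟨fun ⟨a, ha, b, hb, hap, hbp⟩ => ⟨b, hb, a, ha, hbp, hap⟩,
    fun ⟨a, ha, b, hb, hap, hbp⟩ => ⟨b, hb, a, ha, hbp, hap⟩⟩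

lemma card_crossPairs {N : ℕ} (S : Finset (Fin N)) :
    #(crossPairs S) = #S * (N - #S) := by
  have pair_ne {a b : Fin N} (ha : a ∈ S) (hb : b ∉ S) : ¬ (s(a, b)).IsDiag :=
    Sym2.mk_isDiag_iff.not.2 fun h => hb (h ▸ ha)
  have hbij : #(S ×ˢ Sᶜ) = #(crossPairs S) := by
    refine card_bij (fun ab hab => ⟨s(ab.1, ab.2), pair_ne (mem_product.1 hab).1
      (mem_compl.1 (mem_product.1 hab).2)⟩) ?_ ?_ ?_
    · intro ab hab
      rw [mem_product, mem_compl] at hab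
      simp only [crossPairs, mem_filter, mem_univ, true_and]
      exact ⟨ab.1, hab.1, ab.2, hab.2, Sym2.mem_mk_left _ _, Sym2.mem_mk_right _ _⟩
    · intro ab hab ab' hab' h
      rw [mem_product, mem_compl] at hab hab'
      rcases Sym2.eq_iff.1 (congrArg Subtype.val h) with ⟨h1, h2⟩ | ⟨h1, -⟩
      · exact Prod.ext h1 h2
      · exact absurd (h1 ▸ hab.1) hab'.2
    · intro p hp
      simp only [crossPairs, mem_filter, mem_univ, true_and] at hp
      obtain ⟨a, ha, b, hb, hap, hbp⟩ := hp
      have hab : a ≠ b := fun h => hb (h ▸ ha)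
      exact ⟨(a, b), mem_product.2 ⟨ha, mem_compl.2 hb⟩,
        Subtype.ext ((Sym2.mem_and_mem_iff hab).1 ⟨hap, hbp⟩).symm⟩
  rw [← hbij, card_product, card_compl, Fintype.card_fin]

lemma IsJoin.pos {N M k : ℕ} {Γ : Labelling N M} (h : IsJoin k Γ) : 0 < M := by
  obtain ⟨S, ⟨a, ha⟩, ⟨b, hb⟩, -⟩ := h
  have hab : a ≠ b := fun h => mem_compl.1 hb (h ▸ ha)
  exact Fin.pos (Γ ⟨s(a, b), Sym2.mk_isDiag_iff.not.2 hab⟩)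

lemma IsJoin.exists_small_side {N M k : ℕ} {Γ : Labelling N M} (h : IsJoin k Γ) :
    ∃ S : Finset (Fin N), #S ∈ Icc 1 (N / 2) ∧ ∀ p ∈ crossPairs S, (Γ p : ℕ) = k := by
  obtain ⟨S, hS, hSc, hcross⟩ := h
  have hconst : ∀ p ∈ crossPairs S, (Γ p : ℕ) = k := by
    intro p hp
    simp only [crossPairs, mem_filter, mem_univ, true_and] at hp
    obtain ⟨a, ha, b, hb, hap, hbp⟩ := hp
    exact hcross a b ha hb p hap hbp
  have hcard : #Sᶜ = N - #S := by rw [card_compl, Fintype.card_fin]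
  by_cases hle : #S ≤ N / 2
  · exact ⟨S, mem_Icc.2 ⟨hS.card_pos, hle⟩, hconst⟩
  · refine ⟨Sᶜ, mem_Icc.2 ⟨hSc.card_pos, by omega⟩, ?_⟩
    rwa [crossPairs_compl]

lemma card_isJoin_div_le (N M k : ℕ) :
    (#{Γ : Labelling N M | IsJoin k Γ} : ℝ) / Fintype.card (Labelling N M) ≤
      ∑ j ∈ Icc 1 (N / 2), (N.choose j : ℝ) * (1 / (M : ℝ)) ^ (j * (N - j)) := by
  obtain rfl | hM := M.eq_zero_or_pos
  · have hempty : #{Γ : Labelling N 0 | IsJoin k Γ} = 0 :=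
      card_eq_zero.2 (filter_eq_empty_iff.2 fun _ _ h => h.pos.false)
    rw [hempty, Nat.cast_zero, zero_div]
    positivity
  have hunion : ({Γ : Labelling N M | IsJoin k Γ} : Finset _) ⊆
      ({S : Finset (Fin N) | #S ∈ Icc 1 (N / 2)} : Finset _).biUnion
        fun S => {Γ : Labelling N M | ∀ p ∈ crossPairs S, (Γ p : ℕ) = k} := by
    intro Γ hΓ
    obtain ⟨S, hS, hconst⟩ := (mem_filter.1 hΓ).2.exists_small_side
    exact mem_biUnion.2
      ⟨S, mem_filter.2 ⟨mem_univ S, hS⟩, mem_filter.2 ⟨mem_univ Γ, hconst⟩⟩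
  calc (#{Γ : Labelling N M | IsJoin k Γ} : ℝ) / Fintype.card (Labelling N M)
      ≤ ∑ S : Finset (Fin N) with #S ∈ Icc 1 (N / 2),
          (#{Γ : Labelling N M | ∀ p ∈ crossPairs S, (Γ p : ℕ) = k} : ℝ) /
            Fintype.card (Labelling N M) := by
        rw [← sum_div]
        gcongr
        exact_mod_cast (card_le_card hunion).trans card_biUnion_le
    _ ≤ ∑ S : Finset (Fin N) with #S ∈ Icc 1 (N / 2), (1 / (M : ℝ)) ^ (#S * (N - #S)) := by
        gcongr with S
        rw [← card_crossPairs]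
        exact card_filter_forall_val_eq_div_le hM k (crossPairs S)
    _ = ∑ j ∈ Icc 1 (N / 2), (N.choose j : ℝ) * (1 / (M : ℝ)) ^ (j * (N - j)) := by
        rw [sum_filter_card_mem_eq_sum_choose (g := fun j => (1 / (M : ℝ)) ^ (j * (N - j))),
          Fintype.card_fin]
        simp only [nsmul_eq_mul]

lemma tendsto_sum_choose_mul_one_div_pow (f : ℕ → ℕ) (hf : Tendsto f atTop atTop) :
    Tendsto (fun N : ℕ =>
        ∑ j ∈ Icc 1 (N / 2), (N.choose j : ℝ) * (1 / (f N : ℝ)) ^ (j * (N - j)))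
      atTop (nhds 0) := by
  have hgeom : Tendsto (fun N : ℕ => 4 * ((N : ℝ) * (1 / 2) ^ N)) atTop (nhds 0) := by
    simpa using (tendsto_self_mul_const_pow_of_lt_one (r := (1 : ℝ) / 2)
      (by norm_num) (by norm_num)).const_mul 4
  refine squeeze_zero' (Eventually.of_forall fun N => by positivity) ?_ hgeom
  filter_upwards [hf.eventually_ge_atTop 4] with N hfN
  have hx : 1 / (f N : ℝ) ≤ 1 / 4 :=
    one_div_le_one_div_of_le (by norm_num) (by exact_mod_cast hfN)
  calc ∑ j ∈ Icc 1 (N / 2), (N.choose j : ℝ) * (1 / (f N : ℝ)) ^ (j * (N - j))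
      ≤ ∑ _j ∈ Icc 1 (N / 2), (2 : ℝ) ^ N * (1 / (f N : ℝ)) ^ (N - 1) := by
        refine sum_le_sum fun j hj => ?_
        rw [mem_Icc] at hj
        exact choose_mul_pow_le (by positivity) (hx.trans (by norm_num)) hj.1 (by omega)
    _ ≤ N * ((2 : ℝ) ^ N * (1 / 4) ^ (N - 1)) := by
        rw [sum_const, Nat.card_Icc, Nat.add_sub_cancel, nsmul_eq_mul]
        gcongr
        exact_mod_cast Nat.div_le_self N 2
    _ = 4 * ((N : ℝ) * (1 / 2) ^ N) := by
        cases N with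
        | zero => simp
        | succ n =>
          have h : (2 : ℝ) ^ (n + 1) * (1 / 4) ^ n = 4 * (1 / 2) ^ (n + 1) := by
            rw [pow_succ, mul_right_comm, ← mul_pow]; norm_num; ring
          rw [Nat.add_sub_cancel, h]; ring

theorem join_uniformly_small_general (k : ℕ) (f : ℕ → ℕ)
    (hdiv : Tendsto f atTop atTop) :
    (∀ N : ℕ,
      ((Finset.univ.filter fun Γ : Labelling N (f N) => IsJoin k Γ).card : ℝ) /
          (Fintype.card (Labelling N (f N)) : ℝ) ≤
        ∑ j ∈ Finset.Icc 1 (N / 2), (N.choose j : ℝ) * (1 / (f N : ℝ)) ^ (j * (N - j))) ∧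
    Tendsto (fun N =>
        ((Finset.univ.filter fun Γ : Labelling N (f N) => IsJoin k Γ).card : ℝ) /
          (Fintype.card (Labelling N (f N)) : ℝ)) atTop (nhds 0) := by
  have hbound N := card_isJoin_div_le N (f N) k
  exact ⟨hbound, squeeze_zero (fun N => by positivity) hbound
    (tendsto_sum_choose_mul_one_div_pow f hdiv)⟩

/-- For every label `k` and non-decreasing divergent `f`, the probability that a random
labelling in `𝒢^{N,f(N)}` is a `k`-join is at most
`Σ_{j=1}^{⌊N/2⌋} C(N,j) (1/f(N))^{j(N-j)}`, and it tends to `0` as `N → ∞`. -/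
theorem join_uniformly_small (k : ℕ) (f : ℕ → ℕ) (hmono : Monotone f)
    (hdiv : Tendsto f atTop atTop) :
    (∀ N : ℕ,
      ((Finset.univ.filter fun Γ : Labelling N (f N) => IsJoin k Γ).card : ℝ) /
          (Fintype.card (Labelling N (f N)) : ℝ) ≤
        ∑ j ∈ Finset.Icc 1 (N / 2), (N.choose j : ℝ) * (1 / (f N : ℝ)) ^ (j * (N - j))) ∧
    Tendsto (fun N =>
        ((Finset.univ.filter fun Γ : Labelling N (f N) => IsJoin k Γ).card : ℝ) /
          (Fintype.card (Labelling N (f N)) : ℝ)) atTop (nhds 0) :=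
  join_uniformly_small_general k f hdiv
end

section
/- With X counting ordered triples (v₁,v₂,v₃) of distinct vertices with pairs {v₁,v₂} and {v₁,v₃} both carrying the distinguished label in a uniform random labelling with f(N) labels: if N^{3/2}/f(N) → ∞ (and f is non-decreasing divergent), then P[X ≠ 0] → 1 as N → ∞; i.e. asymptotically almost surely the labelling is not (2,2)-free. -/
open Filter Finset
open scoped Classical

/-- `countX Γ` is the number of ordered triples `(v₁, v₂, v₃)` of distinct vertices such
that the pairs `{v₁,v₂}` and `{v₁,v₃}` both carry the distinguished label `0`. -/
noncomputable def countX {N M : ℕ} (Γ : Labelling N M) : ℕ :=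
  (Finset.univ.filter fun t : Fin N × Fin N × Fin N =>
    t.1 ≠ t.2.1 ∧ t.1 ≠ t.2.2 ∧ t.2.1 ≠ t.2.2 ∧
    (∀ p : DefPair N, t.1 ∈ p.1 → t.2.1 ∈ p.1 → (Γ p : ℕ) = 0) ∧
    (∀ p : DefPair N, t.1 ∈ p.1 → t.2.2 ∈ p.1 → (Γ p : ℕ) = 0)).card


/-!
Write `X = ∑ₜ 1[the pairs {t₁, t₂} and {t₁, t₃} of the cherry t both carry label 0]` over the
triples `t` of distinct vertices, and count over all `M ^ E` labellings instead of taking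
expectations. Each indicator has mean `M⁻²`, and two of them are correlated only when their
cherries share a pair: `O(N⁴)` pairs of cherries share one pair (joint mean `M⁻³`) and `O(N³)`
share both (joint mean `M⁻²`). Hence `E[X²] / E[X]² ≤ 1 + O(M / N²) + O(M² / N³)`, which tends
to `1` when `M = o(N^{3/2})`, and the second moment inequality `P[X ≠ 0] ≥ E[X]² / E[X²]` gives
the claim.
-/

section SecondMoment

variable {Ω ι : Type*}

theorem sq_sum_le_card_filter_ne_zero_mul_sum_sq (s : Finset Ω) (X : Ω → ℕ) :
    (∑ ω ∈ s, X ω) ^ 2 ≤ #{ω ∈ s | X ω ≠ 0} * ∑ ω ∈ s, X ω ^ 2 := by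
  rw [← sum_filter_ne_zero]
  calc (∑ ω ∈ s with X ω ≠ 0, X ω) ^ 2
      ≤ #{ω ∈ s | X ω ≠ 0} * ∑ ω ∈ s with X ω ≠ 0, X ω ^ 2 :=
        sq_sum_le_card_mul_sum_sq (s := {ω ∈ s | X ω ≠ 0})
    _ ≤ #{ω ∈ s | X ω ≠ 0} * ∑ ω ∈ s, X ω ^ 2 :=
      Nat.mul_le_mul_left _ (sum_le_sum_of_subset (filter_subset _ _))

theorem card_filter_product_le {s : Finset Ω} {t : Finset ι} {r : Ω → ι → Prop}
    [∀ a b, Decidable (r a b)] {c : ℕ} (h : ∀ a ∈ s, #{b ∈ t | r a b} ≤ c) :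
    #{q ∈ s ×ˢ t | r q.1 q.2} ≤ #s * c := by
  rw [card_filter (fun q : Ω × ι => r q.1 q.2), sum_product]
  simp_rw [← card_filter]
  simpa using sum_le_card_nsmul s _ c h

theorem pow_card_inter_le [DecidableEq Ω] {s t : Finset Ω} {M k : ℕ} (hM : 0 < M) (hs : #s = k)
    (ht : #t = k) :
    M ^ #(s ∩ t)
      ≤ 1 + (if (s ∩ t).Nonempty then M ^ (k - 1) else 0) + (if s = t then M ^ k else 0) := by
  by_cases hst : s = t
  · subst hst
    simp only [inter_self, hs, if_true]
    omega
  by_cases hne : (s ∩ t).Nonempty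
  · have hlt : #(s ∩ t) < k := by
      refine lt_of_le_of_ne (hs ▸ card_le_card inter_subset_left) fun hk => hst ?_
      exact (eq_of_subset_of_card_le inter_subset_left (hs ▸ hk.ge)).symm.trans
        (eq_of_subset_of_card_le inter_subset_right (ht ▸ hk.ge))
    simp only [hne, hst, if_true, if_false]
    have := Nat.pow_le_pow_right hM (Nat.le_sub_one_of_lt hlt)
    omega
  · simp [not_nonempty_iff_eq_empty.mp hne, hst]

theorem sum_pow_card_inter_le [DecidableEq Ω] {T : Finset ι} {S : ι → Finset Ω} {M k : ℕ}
    (hM : 0 < M) (hS : ∀ t ∈ T, #(S t) = k) :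
    ∑ q ∈ T ×ˢ T, M ^ #(S q.1 ∩ S q.2)
      ≤ #T ^ 2 + M ^ (k - 1) * #{q ∈ T ×ˢ T | (S q.1 ∩ S q.2).Nonempty}
        + M ^ k * #{q ∈ T ×ˢ T | S q.1 = S q.2} := by
  calc ∑ q ∈ T ×ˢ T, M ^ #(S q.1 ∩ S q.2)
      ≤ ∑ q ∈ T ×ˢ T, (1 + (if (S q.1 ∩ S q.2).Nonempty then M ^ (k - 1) else 0)
          + (if S q.1 = S q.2 then M ^ k else 0)) := by
        refine sum_le_sum fun q hq => ?_
        obtain ⟨h1, h2⟩ := mem_product.mp hq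
        exact pow_card_inter_le hM (hS _ h1) (hS _ h2)
    _ = _ := by
        rw [sum_add_distrib, sum_add_distrib, ← sum_filter, ← sum_filter]
        simp [card_product, sq, mul_comm]

end SecondMoment

section VanishingLabels

variable {α ι : Type*} [Fintype α] [DecidableEq α] {M : ℕ}

theorem card_vanishOn_mul_pow (hM : 0 < M) (s : Finset α) :
    #{g : α → Fin M | ∀ a ∈ s, (g a : ℕ) = 0} * M ^ #s = M ^ Fintype.card α := by
  have hset : ({g : α → Fin M | ∀ a ∈ s, (g a : ℕ) = 0} : Finset (α → Fin M)) =
      Fintype.piFinset fun a => if a ∈ s then {⟨0, hM⟩} else univ := by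
    ext g
    simp only [mem_filter, mem_univ, true_and, Fintype.mem_piFinset]
    refine forall_congr' fun a => ?_
    split_ifs with ha <;> simp [ha, Fin.ext_iff]
  rw [hset, Fintype.card_piFinset]
  calc (∏ a, #(if a ∈ s then {⟨0, hM⟩} else univ : Finset (Fin M))) * M ^ #s
      = (∏ a, if a ∈ s then 1 else M) * ∏ a, if a ∈ s then M else 1 := by
        congr 1
        · exact prod_congr rfl fun a _ => by split_ifs <;> simp
        · rw [prod_ite_mem, univ_inter, prod_const]
    _ = M ^ Fintype.card α := by
        rw [← prod_mul_distrib, ← card_univ, ← prod_const]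
        exact prod_congr rfl fun a _ => by split_ifs <;> simp

noncomputable def hitCount (T : Finset ι) (S : ι → Finset α) (g : α → Fin M) : ℕ :=
  #{t ∈ T | ∀ a ∈ S t, (g a : ℕ) = 0}

theorem sum_card_filter_vanishOn {κ : Type*} (I : Finset κ) (U : κ → Finset α) :
    ∑ g : α → Fin M, #{i ∈ I | ∀ a ∈ U i, (g a : ℕ) = 0}
      = ∑ i ∈ I, #{g : α → Fin M | ∀ a ∈ U i, (g a : ℕ) = 0} :=
  sum_card_bipartiteAbove_eq_sum_card_bipartiteBelow _

variable {T : Finset ι} {S : ι → Finset α} {k : ℕ}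

theorem hitCount_sq (g : α → Fin M) :
    hitCount T S g ^ 2 = #{q ∈ T ×ˢ T | ∀ a ∈ S q.1 ∪ S q.2, (g a : ℕ) = 0} := by
  rw [hitCount, sq, ← card_product, ← filter_product]
  exact congrArg card (filter_congr fun _ _ => forall_mem_union.symm)

theorem sum_hitCount_mul_pow (hM : 0 < M) (hS : ∀ t ∈ T, #(S t) = k) :
    (∑ g : α → Fin M, hitCount T S g) * M ^ k = #T * M ^ Fintype.card α := by
  simp only [hitCount]
  rw [sum_card_filter_vanishOn, sum_mul, ← smul_eq_mul, ← sum_const]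
  exact sum_congr rfl fun t ht => by rw [← hS t ht, card_vanishOn_mul_pow hM]

theorem sum_hitCount_sq_mul_pow (hM : 0 < M) (hS : ∀ t ∈ T, #(S t) = k) :
    (∑ g : α → Fin M, hitCount T S g ^ 2) * M ^ (2 * k)
      = M ^ Fintype.card α * ∑ q ∈ T ×ˢ T, M ^ #(S q.1 ∩ S q.2) := by
  simp_rw [hitCount_sq]
  rw [sum_card_filter_vanishOn, sum_mul, mul_sum]
  refine sum_congr rfl fun q hq => ?_
  obtain ⟨h1, h2⟩ := mem_product.mp hq
  rw [show 2 * k = #(S q.1) + #(S q.2) by rw [hS _ h1, hS _ h2, two_mul],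
    ← card_union_add_card_inter, pow_add, ← mul_assoc, card_vanishOn_mul_pow hM]

theorem card_sq_mul_pow_le (hM : 0 < M) (hS : ∀ t ∈ T, #(S t) = k) :
    #T ^ 2 * M ^ Fintype.card α
      ≤ #{g : α → Fin M | hitCount T S g ≠ 0} * ∑ q ∈ T ×ˢ T, M ^ #(S q.1 ∩ S q.2) := by
  refine Nat.le_of_mul_le_mul_right ?_ (pow_pos hM (Fintype.card α))
  calc #T ^ 2 * M ^ Fintype.card α * M ^ Fintype.card α
      = ((∑ g : α → Fin M, hitCount T S g) * M ^ k) ^ 2 := by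
        rw [sum_hitCount_mul_pow hM hS]; ring
    _ = (∑ g : α → Fin M, hitCount T S g) ^ 2 * M ^ (2 * k) := by ring
    _ ≤ #{g : α → Fin M | hitCount T S g ≠ 0} * (∑ g : α → Fin M, hitCount T S g ^ 2)
          * M ^ (2 * k) :=
        Nat.mul_le_mul_right _ (sq_sum_le_card_filter_ne_zero_mul_sum_sq _ _)
    _ = _ := by rw [mul_assoc, sum_hitCount_sq_mul_pow hM hS]; ring

end VanishingLabels

section Cherries

variable {N : ℕ}

def distinctTriples (N : ℕ) : Finset (Fin N × Fin N × Fin N) :=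
  {t | t.1 ≠ t.2.1 ∧ t.1 ≠ t.2.2 ∧ t.2.1 ≠ t.2.2}

def cherryEdges (t : Fin N × Fin N × Fin N) : Finset (DefPair N) :=
  {p | t.1 ∈ p.1 ∧ (t.2.1 ∈ p.1 ∨ t.2.2 ∈ p.1)}

theorem countX_eq_hitCount {M : ℕ} (Γ : Labelling N M) :
    countX Γ = hitCount (distinctTriples N) cherryEdges Γ := by
  simp only [countX, hitCount, distinctTriples, filter_filter, cherryEdges, mem_filter, mem_univ,
    true_and, and_assoc, and_or_left, or_imp, forall_and, and_imp]

theorem cherryEdges_eq {t : Fin N × Fin N × Fin N} (h1 : t.1 ≠ t.2.1) (h2 : t.1 ≠ t.2.2) :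
    cherryEdges t = {⟨s(t.1, t.2.1), by simpa using h1⟩, ⟨s(t.1, t.2.2), by simpa using h2⟩} := by
  ext p
  simp only [cherryEdges, mem_filter, mem_univ, true_and, mem_insert, mem_singleton,
    Subtype.ext_iff, ← Sym2.mem_and_mem_iff h1, ← Sym2.mem_and_mem_iff h2, and_or_left]

theorem card_cherryEdges {t : Fin N × Fin N × Fin N} (ht : t ∈ distinctTriples N) :
    #(cherryEdges t) = 2 := by
  obtain ⟨h1, h2, h3⟩ := by simpa [distinctTriples] using ht
  rw [cherryEdges_eq h1 h2, card_pair]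
  simpa only [ne_eq, Subtype.mk.injEq, Sym2.congr_right] using h3

theorem mem_of_mem_cherryEdges {t : Fin N × Fin N × Fin N} (ht : t ∈ distinctTriples N)
    {p : DefPair N} (hp : p ∈ cherryEdges t) {u : Fin N} (hu : u ∈ p.1) :
    u ∈ ({t.1, t.2.1, t.2.2} : Finset (Fin N)) := by
  obtain ⟨h1, h2, -⟩ := by simpa [distinctTriples] using ht
  rw [cherryEdges_eq h1 h2] at hp
  simp only [mem_insert, mem_singleton, Subtype.ext_iff] at hp
  rcases hp with hp | hp <;> rw [hp, Sym2.mem_iff] at hu <;> rcases hu with rfl | rfl <;> simp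

theorem card_filter_cherryEdges_inter_nonempty_le {t : Fin N × Fin N × Fin N}
    (ht : t ∈ distinctTriples N) :
    #{t' ∈ distinctTriples N | (cherryEdges t ∩ cherryEdges t').Nonempty} ≤ 18 * N := by
  set V : Finset (Fin N) := {t.1, t.2.1, t.2.2}
  have hV : #V ≤ 3 := card_le_three
  calc _ ≤ #(V ×ˢ (V ×ˢ univ ∪ univ ×ˢ V)) := by
        refine card_le_card fun t' ht' => ?_
        obtain ⟨-, p, hp⟩ := mem_filter.mp ht'
        obtain ⟨hpt, hpt'⟩ := mem_inter.mp hp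
        have hV : ∀ {u}, u ∈ p.1 → u ∈ V := mem_of_mem_cherryEdges ht hpt
        obtain ⟨h1, h23⟩ := (mem_filter.mp hpt').2
        simp only [mem_product, mem_union, mem_univ, and_true, true_and]
        exact ⟨hV h1, h23.imp hV hV⟩
    _ ≤ 3 * (3 * N + N * 3) := by
        grw [card_product, card_union_le, card_product, card_product, card_univ,
          Fintype.card_fin, hV]
    _ = 18 * N := by ring

theorem card_filter_cherryEdges_eq_le {t : Fin N × Fin N × Fin N}
    (ht : t ∈ distinctTriples N) :
    #{t' ∈ distinctTriples N | cherryEdges t = cherryEdges t'} ≤ 27 := by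
  set V : Finset (Fin N) := {t.1, t.2.1, t.2.2}
  have hV : #V ≤ 3 := card_le_three
  calc _ ≤ #(V ×ˢ V ×ˢ V) := by
        refine card_le_card fun t' ht' => ?_
        obtain ⟨ht', heq⟩ := mem_filter.mp ht'
        obtain ⟨h1, h2, -⟩ := by simpa [distinctTriples] using ht'
        have hV : ∀ p ∈ cherryEdges t', ∀ u ∈ p.1, u ∈ V :=
          fun p hp u hu => mem_of_mem_cherryEdges ht (heq ▸ hp) hu
        rw [cherryEdges_eq h1 h2] at hV
        simp only [mem_insert, mem_singleton, forall_eq_or_imp, forall_eq, Sym2.mem_iff,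
          forall_eq_or_imp, forall_eq] at hV
        simp only [mem_product]
        exact ⟨hV.1.1, hV.1.2, hV.2.2⟩
    _ ≤ 27 := by grw [card_product, card_product, hV]

theorem pow_three_le_card_distinctTriples : N ^ 3 ≤ #(distinctTriples N) + 3 * N ^ 2 := by
  have hcompl : (distinctTriples N)ᶜ ⊆ (univ.image fun x : Fin N × Fin N => (x.1, x.1, x.2))
      ∪ (univ.image fun x : Fin N × Fin N => (x.1, x.2, x.1))
      ∪ (univ.image fun x : Fin N × Fin N => (x.1, x.2, x.2)) := by
    rintro ⟨a, b, c⟩ h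
    simp only [distinctTriples, mem_compl, mem_filter, mem_univ, true_and, not_and_or,
      not_not] at h
    simp only [mem_union, mem_image, mem_univ, true_and, Prod.exists, Prod.mk.injEq]
    rcases h with rfl | rfl | rfl <;> simp
  have hcard : #(distinctTriples N)ᶜ ≤ 3 * N ^ 2 := by
    grw [card_le_card hcompl, card_union_le, card_union_le, card_image_le, card_image_le,
      card_image_le]
    simp only [card_univ, Fintype.card_prod, Fintype.card_fin, sq]
    omega
  have hsplit := card_add_card_compl (distinctTriples N)
  simp only [Fintype.card_prod, Fintype.card_fin] at hsplit
  calc N ^ 3 = #(distinctTriples N) + #(distinctTriples N)ᶜ := by rw [hsplit]; ring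
    _ ≤ _ := by omega

end Cherries

theorem card_mul_pow_le_card_countX_ne_zero_mul {N M : ℕ} (hM : 0 < M) :
    #(distinctTriples N) * M ^ Fintype.card (DefPair N)
      ≤ #{Γ : Labelling N M | countX Γ ≠ 0}
        * (#(distinctTriples N) + (18 * N * M + 27 * M ^ 2)) := by
  set D := #(distinctTriples N)
  obtain hD | hD := Nat.eq_zero_or_pos D
  · simp [hD]
  have hS : ∀ t ∈ distinctTriples N, #(cherryEdges t) = 2 := fun _ ht => card_cherryEdges ht
  have hov := card_filter_product_le (r := fun t t' => (cherryEdges t ∩ cherryEdges t').Nonempty)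
    fun _ ht => card_filter_cherryEdges_inter_nonempty_le (N := N) ht
  have heq := card_filter_product_le (r := fun t t' => cherryEdges t = cherryEdges t')
    fun _ ht => card_filter_cherryEdges_eq_le (N := N) ht
  have hW : ∑ q ∈ distinctTriples N ×ˢ distinctTriples N,
        M ^ #(cherryEdges q.1 ∩ cherryEdges q.2)
      ≤ D ^ 2 + M * (D * (18 * N)) + M ^ 2 * (D * 27) := by
    refine (sum_pow_card_inter_le hM hS).trans ?_
    rw [Nat.add_one_sub_one, pow_one]
    gcongr
  rw [show (countX : Labelling N M → ℕ) = hitCount _ _ from funext countX_eq_hitCount]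
  refine Nat.le_of_mul_le_mul_left ?_ hD
  calc D * (D * M ^ Fintype.card (DefPair N)) = D ^ 2 * M ^ Fintype.card (DefPair N) := by ring
    _ ≤ _ := card_sq_mul_pow_le hM hS
    _ ≤ _ := Nat.mul_le_mul_left _ hW
    _ = _ := by ring

theorem one_sub_div_le_div_of_mul_le {a c d m : ℝ} (hd : 0 < d) (hc : 0 ≤ c) (hm : 0 < m)
    (h : d * m ≤ a * (d + c)) : 1 - c / d ≤ a / m := by
  rw [le_div_iff₀ hm, one_sub_div hd.ne', div_mul_eq_mul_div, div_le_iff₀ hd]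
  nlinarith [mul_nonneg (sq_nonneg c) hm.le]

theorem one_sub_le_card_countX_ne_zero_div {N M : ℕ} (hN : 6 ≤ N) (hM : 0 < M) :
    1 - (36 * M / N ^ 2 + 54 * M ^ 2 / N ^ 3 : ℝ)
      ≤ #{Γ : Labelling N M | countX Γ ≠ 0} / Fintype.card (Labelling N M) := by
  have hD : N ^ 3 ≤ 2 * #(distinctTriples N) := by
    have := pow_three_le_card_distinctTriples (N := N)
    nlinarith
  have hDR : (N : ℝ) ^ 3 ≤ 2 * #(distinctTriples N) := by exact_mod_cast hD
  have hD0 : (0 : ℝ) < #(distinctTriples N) := by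
    have : (0 : ℝ) < N ^ 3 := by positivity
    linarith
  have hc : (0 : ℝ) ≤ 18 * N * M + 27 * M ^ 2 := by positivity
  calc 1 - (36 * M / N ^ 2 + 54 * M ^ 2 / N ^ 3 : ℝ)
      = 1 - 2 * (18 * N * M + 27 * M ^ 2) / N ^ 3 := by field_simp; ring
    _ ≤ 1 - (18 * N * M + 27 * M ^ 2) / #(distinctTriples N) := by
        refine sub_le_sub_left ?_ 1
        rw [div_le_div_iff₀ hD0 (by positivity)]
        nlinarith [mul_le_mul_of_nonneg_left hDR hc]
    _ ≤ _ := by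
        refine one_sub_div_le_div_of_mul_le hD0 hc (by simp [hM]) ?_
        rw [Fintype.card_fun, Fintype.card_fin]
        exact_mod_cast card_mul_pow_le_card_countX_ne_zero_mul hM

theorem div_rpow_three_halves_sq (M : ℝ) {N : ℝ} (hN : 0 ≤ N) :
    (M / N ^ (3 / 2 : ℝ)) ^ 2 = M ^ 2 / N ^ 3 := by
  rw [div_pow, ← Real.rpow_natCast (N ^ _), ← Real.rpow_mul hN]
  norm_num

theorem prob_X_ne_zero_tendsto_one_general (f : ℕ → ℕ)
    (hf : Tendsto (fun N : ℕ => (N : ℝ) ^ ((3 : ℝ) / 2) / (f N : ℝ)) atTop atTop) :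
    Tendsto (fun N =>
        ((Finset.univ.filter fun Γ : Labelling N (f N) => countX Γ ≠ 0).card : ℝ) /
          (Fintype.card (Labelling N (f N)) : ℝ)) atTop (nhds 1) := by
  set x : ℕ → ℝ := fun N => f N / (N : ℝ) ^ (3 / 2 : ℝ)
  have hx : Tendsto x atTop (nhds 0) := by
    simpa only [x, Pi.inv_def, inv_div] using hf.inv_tendsto_atTop
  have hlower : Tendsto (fun N => 1 - (36 * x N + 54 * x N ^ 2)) atTop (nhds 1) := by
    simpa using ((hx.const_mul 36).add ((hx.pow 2).const_mul 54)).const_sub 1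
  refine tendsto_of_tendsto_of_tendsto_of_le_of_le' hlower tendsto_const_nhds ?_ ?_
  · filter_upwards [eventually_ge_atTop 6, hf.eventually_gt_atTop 0] with N hN hfN
    -- `hf` rules out `f N = 0` eventually only because `x / 0 = 0`.
    have hM : 0 < f N := Nat.pos_of_ne_zero fun h => by simp [h] at hfN
    have hN1 : (1 : ℝ) ≤ N := by exact_mod_cast (by omega : 1 ≤ N)
    refine le_trans ?_ (one_sub_le_card_countX_ne_zero_div hN hM)
    simp only [x]
    rw [div_rpow_three_halves_sq _ (by positivity), mul_div_assoc, mul_div_assoc]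
    gcongr
    exact_mod_cast Real.rpow_le_rpow_of_exponent_le hN1 (by norm_num : (3 / 2 : ℝ) ≤ (2 : ℕ))
  · filter_upwards with N
    exact div_le_one_of_le₀ (by exact_mod_cast card_le_univ _) (by positivity)

/-- If `f` is non-decreasing, divergent, and `N^{3/2}/f(N) → ∞`, then `P[X ≠ 0] → 1`:
asymptotically almost surely the random labelling is not (2,2)-free. -/
theorem prob_X_ne_zero_tendsto_one (f : ℕ → ℕ) (hmono : Monotone f)
    (hdiv : Tendsto f atTop atTop)
    (hf : Tendsto (fun N : ℕ => (N : ℝ) ^ ((3 : ℝ) / 2) / (f N : ℝ)) atTop atTop) :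
    Tendsto (fun N =>
        ((Finset.univ.filter fun Γ : Labelling N (f N) => countX Γ ≠ 0).card : ℝ) /
          (Fintype.card (Labelling N (f N)) : ℝ)) atTop (nhds 1) :=
  prob_X_ne_zero_tendsto_one_general f hf
end

section
/- The probability that a uniformly random labelling of the pairs of an N-vertex set with f(N) labels is (2,2)-free equals ((f(N)-1)/f(N))^{C(N,2)} · (1 + Σ_{k=1}^{⌊N/2⌋} N!·(f(N)-1)^{-k} / ((N-2k)!·k!·2^k)). -/
open Finset
open scoped Classical

/-- A labelling is (2,2)-free if no two distinct pairs sharing a vertex both carry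
the distinguished label, i.e. the distinguished pairs form a partial matching. -/
def TwoTwoFree {N M : ℕ} (Γ : Labelling N M) : Prop :=
  ∀ p q : DefPair N, (Γ p : ℕ) = 0 → (Γ q : ℕ) = 0 → p ≠ q →
    ∀ v : Fin N, v ∈ p.1 → v ∉ q.1

/-! The distinguished pairs of a (2,2)-free labelling form a matching `S`, and exactly
`(M - 1) ^ (C(N,2) - #S)` labellings have `S` as their set of distinguished pairs. A matching
with `k` pairs is traced out by `k! * 2^k` injections `Fin k × Bool ↪ Fin N` (an ordering of its
pairs and an orientation of each pair), so there are `N! / ((N - 2k)! * k! * 2^k)` of them. -/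

open scoped Nat

abbrev ProperPair (V : Type*) := {p : Sym2 V // ¬ p.IsDiag}

section Matchings

variable {V : Type*}

def IsMatching (S : Finset (ProperPair V)) : Prop :=
  ∀ p ∈ S, ∀ q ∈ S, p ≠ q → ∀ v, v ∈ p.1 → v ∉ q.1

theorem ProperPair.mk_true_false_eq (e : ProperPair V) (o : Bool ≃ {v // v ∈ e.1}) :
    s((o true).1, (o false).1) = e.1 :=
  ((Sym2.mem_and_mem_iff (by simp [Subtype.ext_iff.not.symm])).1 ⟨(o true).2, (o false).2⟩).symm

variable {k : ℕ}

def pairAt (f : Fin k × Bool ↪ V) (i : Fin k) : ProperPair V :=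
  ⟨s(f (i, true), f (i, false)), by simp⟩

theorem mem_pairAt {f : Fin k × Bool ↪ V} {i : Fin k} {v : V} :
    v ∈ (pairAt f i).1 ↔ ∃ b, f (i, b) = v := by
  simp only [pairAt, Sym2.mem_iff, Bool.exists_bool]
  tauto

theorem pairAt_injective (f : Fin k × Bool ↪ V) : Function.Injective (pairAt f) := by
  intro i j h
  simpa [pairAt] using Subtype.ext_iff.1 h

variable [DecidableEq V]

noncomputable def matchingOf (f : Fin k × Bool ↪ V) : Finset (ProperPair V) :=
  univ.image (pairAt f)

theorem card_matchingOf (f : Fin k × Bool ↪ V) : #(matchingOf f) = k := by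
  rw [matchingOf, card_image_of_injective _ (pairAt_injective f), card_univ, Fintype.card_fin]

theorem isMatching_matchingOf (f : Fin k × Bool ↪ V) : IsMatching (matchingOf f) := by
  simp only [IsMatching, matchingOf, mem_image, mem_univ, true_and]
  rintro _ ⟨i, rfl⟩ _ ⟨j, rfl⟩ hij v hi hj
  obtain ⟨b, rfl⟩ := mem_pairAt.1 hi
  obtain ⟨c, hc⟩ := mem_pairAt.1 hj
  obtain ⟨rfl, -⟩ := Prod.mk.inj (f.injective hc)
  exact hij rfl

abbrev PairOrientations (S : Finset (ProperPair V)) := ∀ e : S, Bool ≃ {v // v ∈ e.1.1}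

variable {S : Finset (ProperPair V)}

def ofOrientation (hS : IsMatching S) (σ : Fin k ≃ S) (o : PairOrientations S) :
    Fin k × Bool ↪ V where
  toFun x := (o (σ x.1) x.2).1
  inj' := by
    rintro ⟨i, b⟩ ⟨j, c⟩ h
    dsimp only at h
    have hij : σ i = σ j := by
      by_contra hne
      exact hS _ (σ i).2 _ (σ j).2 (fun h' => hne (Subtype.ext h')) _ (o (σ i) b).2
        (h ▸ (o (σ j) c).2)
    obtain rfl := σ.injective hij
    rw [(o (σ i)).injective (Subtype.ext h)]

theorem pairAt_ofOrientation (hS : IsMatching S) (σ : Fin k ≃ S)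
    (o : PairOrientations S) (i : Fin k) :
    pairAt (ofOrientation hS σ o) i = σ i :=
  Subtype.ext (ProperPair.mk_true_false_eq _ (o (σ i)))

theorem matchingOf_ofOrientation (hS : IsMatching S) (σ : Fin k ≃ S)
    (o : PairOrientations S) : matchingOf (ofOrientation hS σ o) = S := by
  ext e
  simp only [matchingOf, mem_image, mem_univ, true_and, pairAt_ofOrientation]
  exact ⟨by rintro ⟨i, rfl⟩; exact (σ i).2, fun he => ⟨σ.symm ⟨e, he⟩, by simp⟩⟩

theorem ofOrientation_injective (hS : IsMatching S) :
    Function.Injective fun p : (Fin k ≃ S) × PairOrientations S =>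
      ofOrientation hS p.1 p.2 := by
  rintro ⟨σ, o⟩ ⟨τ, o'⟩ h
  obtain rfl : σ = τ := Equiv.ext fun i => Subtype.ext <| by
    simpa [pairAt_ofOrientation] using congrArg (pairAt · i) h
  refine Prod.ext rfl (funext fun e => Equiv.ext fun b => Subtype.ext ?_)
  obtain ⟨i, rfl⟩ := σ.surjective e
  exact DFunLike.congr_fun h (i, b)

variable [Fintype V]

variable (V) in
noncomputable def matchings (k : ℕ) : Finset (Finset (ProperPair V)) :=
  {S | IsMatching S ∧ #S = k}

theorem ProperPair.card_subtype_mem (e : ProperPair V) : Fintype.card {v // v ∈ e.1} = 2 := by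
  obtain ⟨z, hz⟩ := e
  induction z using Sym2.ind with
  | _ a b =>
    rw [Sym2.mk_isDiag_iff] at hz
    rw [Fintype.card_subtype, ← card_pair hz]
    congr 1
    ext v
    simp

theorem exists_ofOrientation_eq (hS : IsMatching S) (f : Fin k × Bool ↪ V)
    (hf : matchingOf f = S) :
    ∃ p : (Fin k ≃ S) × PairOrientations S, ofOrientation hS p.1 p.2 = f := by
  have hmem (i : Fin k) : pairAt f i ∈ S := hf ▸ mem_image_of_mem _ (mem_univ i)
  let σ : Fin k ≃ S := .ofBijective (fun i => ⟨pairAt f i, hmem i⟩) <|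
    (Fintype.bijective_iff_injective_and_card _).2
      ⟨fun i j h => pairAt_injective f (Subtype.ext_iff.1 h), by simp [← hf, card_matchingOf]⟩
  have hσ (e : S) : (σ (σ.symm e)).1 = pairAt f (σ.symm e) := rfl
  let o (e : S) : Bool ≃ {v // v ∈ e.1.1} :=
    .ofBijective (fun b => ⟨f (σ.symm e, b), by
        simpa only [← hσ, σ.apply_symm_apply]
          using (mem_pairAt (f := f) (i := σ.symm e)).2 ⟨b, rfl⟩⟩) <|
      (Fintype.bijective_iff_injective_and_card _).2
        ⟨fun b c h => (Prod.mk.inj (f.injective (Subtype.ext_iff.1 h))).2,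
          by rw [ProperPair.card_subtype_mem, Fintype.card_bool]⟩
  exact ⟨(σ, o), DFunLike.ext _ _ fun x =>
    congrArg (f ⟨·, x.2⟩) (σ.symm_apply_apply x.1)⟩

theorem card_filter_matchingOf_eq (hS : IsMatching S) (hk : #S = k) :
    #{f : Fin k × Bool ↪ V | matchingOf f = S} = k ! * 2 ^ k := by
  rw [← Fintype.card_subtype, ← Fintype.card_congr (Equiv.ofBijective
    (fun p => ⟨ofOrientation hS p.1 p.2, matchingOf_ofOrientation hS p.1 p.2⟩)
    ⟨fun p q h => ofOrientation_injective hS (Subtype.ext_iff.1 h),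
      fun f => (exists_ofOrientation_eq hS f.1 f.2).imp fun _ h => Subtype.ext h⟩)]
  have hσ : Fintype.card (Fin k ≃ S) = k ! := by
    rw [Fintype.card_equiv (Fintype.equivOfCardEq (by simp [hk])), Fintype.card_fin]
  have ho (e : S) : Fintype.card (Bool ≃ {v // v ∈ e.1.1}) = 2 := by
    rw [Fintype.card_equiv (Fintype.equivOfCardEq (by simp [ProperPair.card_subtype_mem])),
      Fintype.card_bool, Nat.factorial_two]
  simp [Fintype.card_prod, Fintype.card_pi, hσ, ho, hk]

variable (V) in
theorem card_matchings_mul (k : ℕ) :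
    #(matchings V k) * (k ! * 2 ^ k) = (Fintype.card V).descFactorial (2 * k) := by
  have hcard : Fintype.card (Fin k × Bool ↪ V) = (Fintype.card V).descFactorial (2 * k) := by
    rw [Fintype.card_embedding_eq, Fintype.card_prod, Fintype.card_fin, Fintype.card_bool,
      mul_comm]
  rw [← hcard, ← card_univ, card_eq_sum_card_fiberwise (f := matchingOf) (t := matchings V k)
    fun f _ => by simp [matchings, isMatching_matchingOf, card_matchingOf],
    sum_congr rfl fun S hS => card_filter_matchingOf_eq (mem_filter.1 hS).2.1 (mem_filter.1 hS).2.2,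
    sum_const, smul_eq_mul]

theorem IsMatching.two_mul_card_le (hS : IsMatching S) :
    2 * #S ≤ Fintype.card V := by
  by_contra! h
  have hpos : 0 < #(matchings V #S) := card_pos.2 ⟨S, by simp [matchings, hS]⟩
  have := card_matchings_mul V #S
  rw [Nat.descFactorial_eq_zero_iff_lt.2 h] at this
  simp [hpos.ne', Nat.factorial_ne_zero] at this

theorem card_matchings_eq {K : Type*} [Field K] [CharZero K] {k : ℕ}
    (hk : 2 * k ≤ Fintype.card V) :
    (#(matchings V k) : K) =
      (Fintype.card V)! / ((Fintype.card V - 2 * k)! * k ! * 2 ^ k) := by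
  rw [eq_div_iff (by simp [Nat.factorial_ne_zero]), ← Nat.factorial_mul_descFactorial hk,
    ← card_matchings_mul]
  push_cast
  ring

theorem sum_isMatching_eq_sum_range {R : Type*} [AddCommMonoid R] (g : ℕ → R) :
    ∑ S ∈ univ.filter (IsMatching (V := V)), g #S =
      ∑ k ∈ range (Fintype.card V / 2 + 1), #(matchings V k) • g k := by
  rw [← sum_fiberwise_of_maps_to' (t := range (Fintype.card V / 2 + 1)) (g := card)
    fun S hS => mem_range.2 (by have := (mem_filter.1 hS).2.two_mul_card_le; omega)]
  simp only [sum_const, filter_filter, matchings]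

theorem sum_card_matchings_mul_zpow {K : Type*} [Field K] [CharZero K] (x : K) :
    ∑ k ∈ range (Fintype.card V / 2 + 1), (#(matchings V k) : K) * x ^ (-(k : ℤ)) =
      1 + ∑ k ∈ Icc 1 (Fintype.card V / 2), (Fintype.card V)! * x ^ (-(k : ℤ)) /
        ((Fintype.card V - 2 * k)! * k ! * 2 ^ k) := by
  rw [range_eq_Ico, sum_eq_sum_Ico_succ_bot (by omega), zero_add, Ico_add_one_right_eq_Icc]
  congr 1
  · rw [card_matchings_eq (by omega)]
    simp [Nat.factorial_ne_zero]
  · refine sum_congr rfl fun k hk => ?_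
    rw [card_matchings_eq (by have := (mem_Icc.1 hk).2; omega), div_mul_eq_mul_div]

end Matchings

theorem card_filter_fiber_eq {α β : Type*} [Fintype α] [Fintype β] [DecidableEq β] (b : β)
    (S : Finset α) :
    #{g : α → β | univ.filter (g · = b) = S} =
      (Fintype.card β - 1) ^ (Fintype.card α - #S) := by
  have key : ∀ g : α → β, univ.filter (g · = b) = S ↔ ∀ a, (g a = b ↔ a ∈ S) := by
    intro g; simp [Finset.ext_iff]
  simp_rw [key]
  rw [← Fintype.card_subtype,
    Fintype.card_congr (Equiv.subtypePiEquivPi (p := fun a y => (y = b ↔ a ∈ S))),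
    Fintype.card_pi]
  have hfib : ∀ a, Fintype.card {y // y = b ↔ a ∈ S} =
      if a ∈ Sᶜ then Fintype.card β - 1 else 1 := by
    intro a
    by_cases ha : a ∈ S <;> simp [ha, Fintype.card_subtype, filter_ne']
  simp_rw [hfib]
  rw [prod_ite_mem, univ_inter, prod_const, card_compl]

section Labellings

variable {N M : ℕ}

theorem twoTwoFree_iff_isMatching [NeZero M] (Γ : Labelling N M) :
    TwoTwoFree Γ ↔ IsMatching (univ.filter (Γ · = 0)) := by
  simp only [TwoTwoFree, IsMatching, mem_filter, mem_univ, true_and, Fin.val_eq_zero_iff]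
  exact ⟨fun h p hp q hq => h p q hp hq, fun h p q hp hq => h p hp q hq⟩

theorem card_twoTwoFree [NeZero M] :
    #{Γ : Labelling N M | TwoTwoFree Γ} =
      ∑ S ∈ univ.filter (IsMatching (V := Fin N)), (M - 1) ^ (N.choose 2 - #S) := by
  rw [card_eq_sum_card_fiberwise (f := fun Γ => univ.filter (Γ · = 0))
    (t := univ.filter IsMatching) fun Γ hΓ => by simpa [twoTwoFree_iff_isMatching] using hΓ]
  refine sum_congr rfl fun S hS => ?_
  have hfiber := card_filter_fiber_eq (0 : Fin M) S
  rw [Fintype.card_fin, Sym2.card_subtype_not_diag, Fintype.card_fin] at hfiber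
  rw [filter_filter, ← hfiber]
  congr 1
  ext Γ
  simp only [mem_filter, mem_univ, true_and]
  refine and_iff_right_of_imp fun hΓ => ?_
  rw [twoTwoFree_iff_isMatching, hΓ]
  exact (mem_filter.1 hS).2

end Labellings

/-- The probability that a uniformly random labelling with `M = f(N)` labels is (2,2)-free
equals `((M-1)/M)^{C(N,2)} · (1 + Σ_{k=1}^{⌊N/2⌋} N!·(M-1)^{-k}/((N-2k)!·k!·2^k))`. -/
theorem prob_two_two_free (N M : ℕ) (hM : 2 ≤ M) :
    ((Finset.univ.filter fun Γ : Labelling N M => TwoTwoFree Γ).card : ℝ) /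
        (Fintype.card (Labelling N M) : ℝ) =
      (((M : ℝ) - 1) / (M : ℝ)) ^ (N.choose 2) *
        (1 + ∑ k ∈ Finset.Icc 1 (N / 2),
          (N.factorial : ℝ) * ((M : ℝ) - 1) ^ (-(k : ℤ)) /
            (((N - 2 * k).factorial : ℝ) * (k.factorial : ℝ) * 2 ^ k)) := by
  have hM1 : (M : ℝ) - 1 ≠ 0 := by
    have : (2 : ℝ) ≤ M := by exact_mod_cast hM
    linarith
  have hpow (S : Finset (DefPair N)) : (((M - 1) ^ (N.choose 2 - #S) : ℕ) : ℝ) =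
      ((M : ℝ) - 1) ^ N.choose 2 * ((M : ℝ) - 1) ^ (-(#S : ℤ)) := by
    have hS : #S ≤ N.choose 2 := (card_le_univ S).trans_eq <| by
      rw [Sym2.card_subtype_not_diag, Fintype.card_fin]
    rw [zpow_neg, zpow_natCast, ← pow_sub₀ _ hM1 hS]
    rw [Nat.cast_pow, Nat.cast_sub (by omega), Nat.cast_one]
  have : NeZero M := ⟨by omega⟩
  rw [card_twoTwoFree, Nat.cast_sum, sum_congr rfl fun S _ => hpow S,
    sum_isMatching_eq_sum_range fun k =>
      ((M : ℝ) - 1) ^ N.choose 2 * ((M : ℝ) - 1) ^ (-(k : ℤ))]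
  simp only [nsmul_eq_mul, mul_left_comm _ (((M : ℝ) - 1) ^ N.choose 2), ← mul_sum]
  rw [sum_card_matchings_mul_zpow, Fintype.card_fun, Sym2.card_subtype_not_diag, div_pow]
  simp only [Fintype.card_fin]
  push_cast
  ring
end

section
/- If f(N) = N^{3/2} (rounded to an integer), then the limsup as N → ∞ of the probability that a uniformly random labelling of the pairs of an N-vertex set with f(N) labels is (2,2)-free is at most 2/3. -/
open Filter Finset
open scoped Classical

/-!
Let `X(Γ)` count the ordered pairs of distinct edges that share a vertex and both carry label `0`;
a (2,2)-free labelling has `X = 0`. By Cauchy–Schwarz, `P[X ≠ 0] ≥ E[X]² / E[X²]`. With `M` labels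
and `A` such pairs, `M² E[X] = A`, and `M⁴ E[X²] ≤ A (A + 8NM + 2M²)`: two pairs involve four
distinct edges unless they meet (at most `8N` partners of a given pair), and only two edges when
they coincide up to order. Hence `P[X = 0] ≤ (8NM + 2M²) / (A + 8NM + 2M²)`, where `A ≥ (N - 2)³`,
and for `M = ⌊N^{3/2}⌋` the right-hand side tends to `(0 + 2) / (1 + 0 + 2) = 2/3`.
-/

open Topology

theorem sq_sum_le_card_filter_ne_zero_mul_sum_sq_s19 {α R : Type*} [Semiring R] [LinearOrder R]
    [IsStrictOrderedRing R] [ExistsAddOfLE R] (s : Finset α) (f : α → R) :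
    (∑ x ∈ s, f x) ^ 2 ≤ #{x ∈ s | f x ≠ 0} * ∑ x ∈ s, f x ^ 2 := by
  have hsq : ∑ x ∈ s with f x ≠ 0, f x ^ 2 = ∑ x ∈ s, f x ^ 2 :=
    sum_filter_of_ne fun x _ hx h => hx (by rw [h, sq, zero_mul])
  rw [← sum_filter_ne_zero, ← hsq]
  exact sq_sum_le_card_mul_sum_sq

section PairCount

variable {ι : Type*} [DecidableEq ι]

def pairSet (a : ι × ι) : Finset ι := {a.1, a.2}

theorem card_pairSet {a : ι × ι} (ha : a.1 ≠ a.2) : #(pairSet a) = 2 := card_pair ha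

theorem three_le_card_pairSet_union {a b : ι × ι} (ha : a.1 ≠ a.2) (hb : b.1 ≠ b.2)
    (hba : b ≠ a) (hbs : b ≠ a.swap) : 3 ≤ #(pairSet a ∪ pairSet b) := by
  have hsub : ¬pairSet b ⊆ pairSet a := by
    simp only [pairSet, insert_subset_iff, singleton_subset_iff, mem_insert, mem_singleton]
    rintro ⟨h1 | h1, h2 | h2⟩
    · exact hb (h1.trans h2.symm)
    · exact hba (Prod.ext h1 h2)
    · exact hbs (Prod.ext h1 h2)
    · exact hb (h1.trans h2.symm)
  calc 3 = #(pairSet a) + 1 := by rw [card_pairSet ha]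
    _ ≤ _ := card_lt_card <| subset_union_left.ssubset_of_not_subset fun h =>
      hsub (subset_union_right.trans h)

/-- An upper bound for `M ^ (4 - #(pairSet a ∪ pairSet b))`: the union has four elements unless
the pairs meet, and only two when `b` is `a` or its swap. -/
def overlapWeight (M : ℕ) (a b : ι × ι) : ℕ :=
  1 + (if ¬Disjoint (pairSet a) (pairSet b) then M else 0) +
    (if b = a ∨ b = a.swap then M ^ 2 else 0)

theorem pow_four_sub_card_pairSet_union_le {M : ℕ} [NeZero M] {a b : ι × ι} (ha : a.1 ≠ a.2)
    (hb : b.1 ≠ b.2) : M ^ (4 - #(pairSet a ∪ pairSet b)) ≤ overlapWeight M a b := by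
  have hM : 1 ≤ M := NeZero.one_le
  have htwo : 2 ≤ #(pairSet a ∪ pairSet b) :=
    (card_pairSet ha).symm.le.trans (card_le_card subset_union_left)
  rw [overlapWeight]
  split_ifs with hdisj hab hab
  · rcases hab with rfl | rfl <;> simp [pairSet, Finset.disjoint_left] at hdisj
  · rw [card_union_of_disjoint hdisj, card_pairSet ha, card_pairSet hb]; simp
  · exact (pow_le_pow_right₀ hM (by omega : 4 - _ ≤ 2)).trans (by omega)
  · rw [not_or] at hab
    have h3 := three_le_card_pairSet_union ha hb hab.1 hab.2
    exact (pow_le_pow_right₀ hM (by omega : 4 - _ ≤ 1)).trans (by simp)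

variable {P : Finset (ι × ι)} {Δ : ℕ}

theorem card_filter_not_disjoint_pairSet_le (hΔ : ∀ e, #{b ∈ P | b.1 = e ∨ b.2 = e} ≤ Δ)
    (a : ι × ι) : #{b ∈ P | ¬Disjoint (pairSet a) (pairSet b)} ≤ 2 * Δ := by
  calc _ ≤ #({b ∈ P | b.1 = a.1 ∨ b.2 = a.1} ∪ {b ∈ P | b.1 = a.2 ∨ b.2 = a.2}) := by
        refine card_le_card fun b => ?_
        simp only [pairSet, mem_filter, mem_union, disjoint_insert_left, disjoint_singleton_left,
          mem_insert, mem_singleton]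
        grind
    _ ≤ Δ + Δ := (card_union_le _ _).trans (add_le_add (hΔ a.1) (hΔ a.2))
    _ = 2 * Δ := (two_mul Δ).symm

theorem sum_overlapWeight_le (M : ℕ) (hΔ : ∀ e, #{b ∈ P | b.1 = e ∨ b.2 = e} ≤ Δ)
    (a : ι × ι) : ∑ b ∈ P, overlapWeight M a b ≤ #P + 2 * Δ * M + 2 * M ^ 2 := by
  have hdiag : #{b ∈ P | b = a ∨ b = a.swap} ≤ 2 :=
    (card_le_card fun b => by simp +contextual).trans (card_insert_le a {a.swap})
  simp only [overlapWeight, sum_add_distrib, sum_const, smul_eq_mul, mul_one, ← sum_filter]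
  gcongr
  exact card_filter_not_disjoint_pairSet_le hΔ a

variable [Fintype ι] {M : ℕ} [NeZero M]

theorem card_filter_forall_eq_zero_mul_pow (S : Finset ι) :
    #{Γ : ι → Fin M | ∀ e ∈ S, Γ e = 0} * M ^ #S = M ^ Fintype.card ι := by
  have hpi : ({Γ : ι → Fin M | ∀ e ∈ S, Γ e = 0} : Finset _) =
      Fintype.piFinset fun e => if e ∈ S then {0} else univ := by
    ext Γ
    simp only [mem_filter, mem_univ, true_and, Fintype.mem_piFinset]
    refine ⟨fun h e => ?_, fun h e he => by simpa [he] using h e⟩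
    split_ifs with he
    · exact mem_singleton.2 (h e he)
    · exact mem_univ _
  simp only [hpi, Fintype.card_piFinset, apply_ite card, card_singleton, card_univ,
    Fintype.card_fin]
  rw [prod_ite, prod_const_one, one_mul, prod_const, ← pow_add, filter_not, filter_mem_eq_inter,
    univ_inter, card_sdiff_add_card_eq_card (subset_univ S), card_univ]

def pairCount (P : Finset (ι × ι)) (Γ : ι → Fin M) : ℕ := #{a ∈ P | Γ a.1 = 0 ∧ Γ a.2 = 0}

theorem sum_pairCount_mul (hP : ∀ a ∈ P, a.1 ≠ a.2) :
    (∑ Γ : ι → Fin M, pairCount P Γ) * M ^ 2 = #P * M ^ Fintype.card ι := by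
  have hterm (a) (ha : a ∈ P) :
      #{Γ : ι → Fin M | Γ a.1 = 0 ∧ Γ a.2 = 0} * M ^ 2 = M ^ Fintype.card ι := by
    have h := card_filter_forall_eq_zero_mul_pow (M := M) (pairSet a)
    rw [card_pairSet (hP a ha)] at h
    simpa [pairSet] using h
  calc (∑ Γ : ι → Fin M, pairCount P Γ) * M ^ 2
      = (∑ a ∈ P, #{Γ : ι → Fin M | Γ a.1 = 0 ∧ Γ a.2 = 0}) * M ^ 2 :=
        congrArg (· * M ^ 2) (sum_card_bipartiteAbove_eq_sum_card_bipartiteBelow _)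
    _ = #P * M ^ Fintype.card ι := by rw [sum_mul, sum_congr rfl hterm, sum_const, smul_eq_mul]

theorem sum_pairCount_sq :
    ∑ Γ : ι → Fin M, pairCount P Γ ^ 2 =
      ∑ ab ∈ P ×ˢ P, #{Γ : ι → Fin M | ∀ e ∈ pairSet ab.1 ∪ pairSet ab.2, Γ e = 0} := by
  have hsq (Γ : ι → Fin M) : pairCount P Γ ^ 2 =
      #{ab ∈ P ×ˢ P | ∀ e ∈ pairSet ab.1 ∪ pairSet ab.2, Γ e = 0} := by
    rw [pairCount, sq, ← card_product, ← filter_product]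
    congr 1
    ext ab
    simp only [pairSet, mem_product, mem_filter, mem_union, mem_insert, mem_singleton]
    grind
  simp_rw [hsq]
  exact sum_card_bipartiteAbove_eq_sum_card_bipartiteBelow _

theorem card_forall_eq_zero_mul_pow_four_le {a b : ι × ι} (ha : a.1 ≠ a.2) (hb : b.1 ≠ b.2) :
    #{Γ : ι → Fin M | ∀ e ∈ pairSet a ∪ pairSet b, Γ e = 0} * M ^ 4 ≤
      M ^ Fintype.card ι * overlapWeight M a b := by
  have hcard : #(pairSet a ∪ pairSet b) ≤ 4 :=
    (card_union_le _ _).trans (add_le_add card_le_two card_le_two)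
  rw [← Nat.add_sub_cancel' hcard, pow_add, ← mul_assoc, card_filter_forall_eq_zero_mul_pow]
  exact Nat.mul_le_mul_left _ (pow_four_sub_card_pairSet_union_le ha hb)

theorem sum_pairCount_sq_mul_le (hP : ∀ a ∈ P, a.1 ≠ a.2)
    (hΔ : ∀ e, #{b ∈ P | b.1 = e ∨ b.2 = e} ≤ Δ) :
    (∑ Γ : ι → Fin M, pairCount P Γ ^ 2) * M ^ 4 ≤
      #P * (#P + 2 * Δ * M + 2 * M ^ 2) * M ^ Fintype.card ι := by
  rw [sum_pairCount_sq, sum_mul, sum_product]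
  calc _ ≤ ∑ a ∈ P, ∑ b ∈ P, M ^ Fintype.card ι * overlapWeight M a b :=
        sum_le_sum fun a ha => sum_le_sum fun b hb =>
          card_forall_eq_zero_mul_pow_four_le (hP a ha) (hP b hb)
    _ ≤ ∑ _a ∈ P, M ^ Fintype.card ι * (#P + 2 * Δ * M + 2 * M ^ 2) :=
        sum_le_sum fun a _ => by
          rw [← mul_sum]; exact Nat.mul_le_mul_left _ (sum_overlapWeight_le M hΔ a)
    _ = _ := by rw [sum_const, smul_eq_mul]; ring

theorem card_mul_pow_le_card_pairCount_ne_zero_mul (hP : ∀ a ∈ P, a.1 ≠ a.2)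
    (hΔ : ∀ e, #{b ∈ P | b.1 = e ∨ b.2 = e} ≤ Δ) :
    #P * M ^ Fintype.card ι ≤
      #{Γ : ι → Fin M | pairCount P Γ ≠ 0} * (#P + 2 * Δ * M + 2 * M ^ 2) := by
  rcases P.eq_empty_or_nonempty with rfl | hne
  · simp
  have hpos : 0 < #P * M ^ Fintype.card ι := Nat.mul_pos hne.card_pos (pow_pos (NeZero.pos M) _)
  refine Nat.le_of_mul_le_mul_right ?_ hpos
  calc #P * M ^ Fintype.card ι * (#P * M ^ Fintype.card ι)
      = (∑ Γ : ι → Fin M, pairCount P Γ) ^ 2 * M ^ 4 := by rw [← sum_pairCount_mul hP]; ring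
    _ ≤ #{Γ : ι → Fin M | pairCount P Γ ≠ 0} * (∑ Γ : ι → Fin M, pairCount P Γ ^ 2) * M ^ 4 := by
        gcongr; exact sq_sum_le_card_filter_ne_zero_mul_sum_sq_s19 _ _
    _ ≤ #{Γ : ι → Fin M | pairCount P Γ ≠ 0} *
          (#P * (#P + 2 * Δ * M + 2 * M ^ 2) * M ^ Fintype.card ι) := by
        rw [mul_assoc]; exact Nat.mul_le_mul_left _ (sum_pairCount_sq_mul_le hP hΔ)
    _ = _ := by ring

theorem card_pairCount_eq_zero_div_le (hP : ∀ a ∈ P, a.1 ≠ a.2)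
    (hΔ : ∀ e, #{b ∈ P | b.1 = e ∨ b.2 = e} ≤ Δ) :
    (#{Γ : ι → Fin M | pairCount P Γ = 0} : ℝ) / Fintype.card (ι → Fin M) ≤
      (2 * Δ * M + 2 * M ^ 2) / (#P + 2 * Δ * M + 2 * M ^ 2) := by
  have hsplit : (#{Γ : ι → Fin M | pairCount P Γ = 0} : ℝ) +
      #{Γ : ι → Fin M | pairCount P Γ ≠ 0} = (M : ℝ) ^ Fintype.card ι := by
    exact_mod_cast (card_filter_add_card_filter_not (s := univ) _).trans (by simp)
  have hkey : (#P : ℝ) * M ^ Fintype.card ι ≤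
      #{Γ : ι → Fin M | pairCount P Γ ≠ 0} * (#P + 2 * Δ * M + 2 * M ^ 2) := by
    exact_mod_cast card_mul_pow_le_card_pairCount_ne_zero_mul hP hΔ
  have hM : (0 : ℝ) < M := by exact_mod_cast NeZero.pos M
  rw [Fintype.card_fun, Fintype.card_fin, Nat.cast_pow,
    div_le_div_iff₀ (by positivity) (by positivity)]
  linear_combination (#P + 2 * Δ * M + 2 * M ^ 2 : ℝ) * hsplit + hkey

end PairCount

def adjacentPairs (N : ℕ) : Finset (DefPair N × DefPair N) :=
  {a | a.1 ≠ a.2 ∧ ∃ v, v ∈ a.1.1 ∧ v ∈ a.2.1}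

theorem card_incident_le {N : ℕ} (u : Fin N) : #{q : DefPair N | u ∈ q.1} ≤ N := by
  calc #{q : DefPair N | u ∈ q.1} = #(({q : DefPair N | u ∈ q.1} : Finset _).map
        (Function.Embedding.subtype _)) := (card_map _).symm
    _ ≤ #(univ.image fun w : Fin N => s(u, w)) := card_le_card fun z hz => by
        obtain ⟨q, hq, rfl⟩ := mem_map.1 hz
        obtain ⟨w, hw⟩ := Sym2.mem_iff_exists.1 (mem_filter.1 hq).2
        exact mem_image.2 ⟨w, mem_univ _, hw.symm⟩
    _ ≤ N := card_image_le.trans (by simp)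

theorem card_meeting_le {N : ℕ} (p : DefPair N) :
    #{q : DefPair N | ∃ v ∈ p.1, v ∈ q.1} ≤ 2 * N := by
  induction p using Subtype.rec with | _ p hp => ?_
  induction p using Sym2.ind with | _ u w => ?_
  calc _ ≤ #(({q : DefPair N | u ∈ q.1} : Finset _) ∪ ({q : DefPair N | w ∈ q.1} : Finset _)) :=
        card_le_card fun q => by simp
    _ ≤ N + N := (card_union_le _ _).trans (add_le_add (card_incident_le u) (card_incident_le w))
    _ = 2 * N := (two_mul N).symm

theorem card_adjacentPairs_incident_le {N : ℕ} (e : DefPair N) :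
    #{b ∈ adjacentPairs N | b.1 = e ∨ b.2 = e} ≤ 4 * N := by
  set meet : Finset (DefPair N) := {q | ∃ v ∈ e.1, v ∈ q.1}
  calc _ ≤ #(meet.image (e, ·) ∪ meet.image (·, e)) := card_le_card fun b => by
        simp only [adjacentPairs, mem_filter, mem_univ, true_and, mem_union, mem_image, meet]
        rintro ⟨⟨-, v, hv1, hv2⟩, rfl | rfl⟩
        · exact Or.inl ⟨b.2, ⟨v, hv1, hv2⟩, rfl⟩
        · exact Or.inr ⟨b.1, ⟨v, hv2, hv1⟩, rfl⟩
    _ ≤ #meet + #meet := (card_union_le _ _).trans (add_le_add card_image_le card_image_le)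
    _ ≤ 4 * N := by linarith [card_meeting_le e]

theorem descFactorial_three_le_card_adjacentPairs (N : ℕ) :
    N.descFactorial 3 ≤ #(adjacentPairs N) := by
  let toPair (f : Fin 3 ↪ Fin N) : DefPair N × DefPair N :=
    (⟨s(f 0, f 1), by simp [Sym2.mk_isDiag_iff]⟩, ⟨s(f 0, f 2), by simp [Sym2.mk_isDiag_iff]⟩)
  have hinj : Function.Injective toPair := by
    intro f g h
    have h01 := g.injective.ne (show (0 : Fin 3) ≠ 1 by decide)
    have h02 := g.injective.ne (show (0 : Fin 3) ≠ 2 by decide)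
    have h12 := g.injective.ne (show (1 : Fin 3) ≠ 2 by decide)
    simp only [toPair, Prod.ext_iff, Subtype.ext_iff, Sym2.eq_iff] at h
    ext i
    fin_cases i <;> grind
  have hmaps (f : Fin 3 ↪ Fin N) : toPair f ∈ adjacentPairs N := by
    simp only [adjacentPairs, mem_filter, mem_univ, true_and, ne_eq, toPair, Subtype.mk.injEq,
      Sym2.eq_iff]
    refine ⟨?_, f 0, by simp, by simp⟩
    have := f.injective.ne (show (1 : Fin 3) ≠ 2 by decide)
    have := f.injective.ne (show (0 : Fin 3) ≠ 2 by decide)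
    grind
  calc N.descFactorial 3 = #(univ : Finset (Fin 3 ↪ Fin N)) := by
        rw [card_univ, Fintype.card_embedding_eq, Fintype.card_fin, Fintype.card_fin]
    _ ≤ _ := card_le_card_of_injOn toPair (fun f _ => hmaps f) hinj.injOn

theorem tendsto_natSqrt_div_sqrt :
    Tendsto (fun n : ℕ => (Nat.sqrt n : ℝ) / √n) atTop (𝓝 1) := by
  have hsqrt : Tendsto (fun n : ℕ => √(n : ℝ)) atTop atTop :=
    Real.tendsto_sqrt_atTop.comp tendsto_natCast_atTop_atTop
  have hlower : Tendsto (fun n : ℕ => 1 - (√(n : ℝ))⁻¹) atTop (𝓝 1) := by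
    simpa using tendsto_const_nhds.sub (tendsto_inv_atTop_zero.comp hsqrt)
  refine tendsto_of_tendsto_of_tendsto_of_le_of_le' hlower tendsto_const_nhds ?_ ?_
  · filter_upwards [hsqrt.eventually_gt_atTop 0] with n hn
    rw [le_div_iff₀ hn, sub_mul, inv_mul_cancel₀ hn.ne', one_mul]
    linarith [Real.real_sqrt_lt_nat_sqrt_succ (a := n)]
  · filter_upwards with n
    exact div_le_one_of_le₀ Real.nat_sqrt_le_real_sqrt (Real.sqrt_nonneg _)

theorem tendsto_natSqrt_cube_sq_div :
    Tendsto (fun N : ℕ => (Nat.sqrt (N ^ 3) : ℝ) ^ 2 / (N : ℝ) ^ 3) atTop (𝓝 1) := by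
  have h := (tendsto_natSqrt_div_sqrt.comp (tendsto_pow_atTop (α := ℕ) three_ne_zero)).pow 2
  rw [one_pow] at h
  refine h.congr fun N => ?_
  simp only [Function.comp_apply, div_pow, Nat.cast_pow]
  rw [Real.sq_sqrt (by positivity)]

theorem tendsto_natCast_mul_natSqrt_cube_div :
    Tendsto (fun N : ℕ => (N : ℝ) * Nat.sqrt (N ^ 3) / (N : ℝ) ^ 3) atTop (𝓝 0) := by
  have h := (tendsto_natSqrt_cube_sq_div.div_atTop tendsto_natCast_atTop_atTop).sqrt
  rw [Real.sqrt_zero] at h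
  refine h.congr fun N => ?_
  rw [← Real.sqrt_sq (by positivity : (0 : ℝ) ≤ N * Nat.sqrt (N ^ 3) / (N : ℝ) ^ 3)]
  congr 1
  rcases eq_or_ne (N : ℝ) 0 with hN | hN
  · simp [hN]
  · field_simp

noncomputable def twoTwoFreeBound (N M : ℕ) : ℝ :=
  (8 * N * M + 2 * M ^ 2) / (((N : ℝ) - 2) ^ 3 + 8 * N * M + 2 * M ^ 2)

theorem tendsto_twoTwoFreeBound :
    Tendsto (fun N : ℕ => twoTwoFreeBound N (Nat.sqrt (N ^ 3))) atTop (𝓝 (2 / 3)) := by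
  have hcube : Tendsto (fun N : ℕ => ((N : ℝ) - 2) ^ 3 / (N : ℝ) ^ 3) atTop (𝓝 1) := by
    have h := ((tendsto_const_nhds (x := (1 : ℝ))).sub
      (tendsto_const_div_atTop_nhds_zero_nat 2)).pow 3
    rw [sub_zero, one_pow] at h
    refine h.congr' ?_
    filter_upwards [eventually_ne_atTop 0] with N hN
    field_simp
  have h := ((tendsto_natCast_mul_natSqrt_cube_div.const_mul 8).add
    (tendsto_natSqrt_cube_sq_div.const_mul 2)).div
    ((hcube.add (tendsto_natCast_mul_natSqrt_cube_div.const_mul 8)).add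
      (tendsto_natSqrt_cube_sq_div.const_mul 2)) (by norm_num)
  norm_num at h
  refine h.congr' ?_
  filter_upwards [eventually_ne_atTop 0] with N hN
  have hN3 : (N : ℝ) ^ 3 ≠ 0 := pow_ne_zero 3 (Nat.cast_ne_zero.2 hN)
  rw [Pi.div_apply, twoTwoFreeBound, ← div_div_div_cancel_right₀ hN3 (8 * N * _ + _)]
  congr 1 <;> field_simp

theorem pairCount_adjacentPairs_eq_zero {N M : ℕ} [NeZero M] {Γ : Labelling N M}
    (h : TwoTwoFree Γ) : pairCount (adjacentPairs N) Γ = 0 := by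
  rw [pairCount, card_eq_zero, filter_eq_empty_iff]
  rintro ⟨p, q⟩ ha ⟨hp, hq⟩
  obtain ⟨hne, v, hvp, hvq⟩ := (mem_filter.1 ha).2
  exact h p q (Fin.val_eq_zero_iff.2 hp) (Fin.val_eq_zero_iff.2 hq) hne v hvp hvq

theorem sub_two_pow_three_le_card_adjacentPairs {N : ℕ} (hN : 2 ≤ N) :
    ((N : ℝ) - 2) ^ 3 ≤ #(adjacentPairs N) := by
  have h := (Nat.pow_sub_le_descFactorial N 3).trans (descFactorial_three_le_card_adjacentPairs N)
  rw [show N + 1 - 3 = N - 2 by omega] at h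
  have hR : ((N - 2 : ℕ) : ℝ) ^ 3 ≤ #(adjacentPairs N) := by exact_mod_cast h
  rwa [Nat.cast_sub hN, Nat.cast_ofNat] at hR

theorem prob_twoTwoFree_le {N M : ℕ} [NeZero M] (hN : 2 ≤ N) :
    (#{Γ : Labelling N M | TwoTwoFree Γ} : ℝ) / Fintype.card (Labelling N M) ≤
      twoTwoFreeBound N M := by
  have hP (a) (ha : a ∈ adjacentPairs N) : a.1 ≠ a.2 := (mem_filter.1 ha).2.1
  have hfree : #{Γ : Labelling N M | TwoTwoFree Γ} ≤
      #{Γ : Labelling N M | pairCount (adjacentPairs N) Γ = 0} :=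
    card_le_card (monotone_filter_right _ fun _ _ => pairCount_adjacentPairs_eq_zero)
  have hlow := sub_two_pow_three_le_card_adjacentPairs hN
  have hcube : (0 : ℝ) ≤ ((N : ℝ) - 2) ^ 3 := pow_nonneg (by rw [sub_nonneg]; exact_mod_cast hN) 3
  have hM : (0 : ℝ) < M := by exact_mod_cast NeZero.pos M
  calc _ ≤ (#{Γ : Labelling N M | pairCount (adjacentPairs N) Γ = 0} : ℝ) /
        Fintype.card (Labelling N M) := by gcongr
    _ ≤ (2 * (4 * N : ℕ) * M + 2 * M ^ 2) /
          (#(adjacentPairs N) + 2 * (4 * N : ℕ) * M + 2 * M ^ 2) :=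
        card_pairCount_eq_zero_div_le hP card_adjacentPairs_incident_le
    _ = (8 * N * M + 2 * M ^ 2) / (#(adjacentPairs N) + 8 * N * M + 2 * M ^ 2) := by
        push_cast; ring
    _ ≤ twoTwoFreeBound N M :=
        div_le_div_of_nonneg_left (by positivity) (by positivity) (by linarith)

/-- At the threshold `f(N) = N^{3/2}` (rounded to an integer, i.e. `f(N) = ⌊√(N³)⌋`),
the limsup of the probability that a random labelling is (2,2)-free is at most `2/3`. -/
theorem limsup_prob_two_two_free_le :
    Filter.limsup (fun N : ℕ =>
        ((Finset.univ.filter fun Γ : Labelling N (Nat.sqrt (N ^ 3)) =>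
            TwoTwoFree Γ).card : ℝ) /
          (Fintype.card (Labelling N (Nat.sqrt (N ^ 3))) : ℝ)) atTop ≤ 2 / 3 := by
  refine (limsup_le_limsup ?_ ?_ tendsto_twoTwoFreeBound.isBoundedUnder_le).trans_eq
    tendsto_twoTwoFreeBound.limsup_eq
  · filter_upwards [eventually_ge_atTop 2] with N hN
    have : NeZero (Nat.sqrt (N ^ 3)) := ⟨(Nat.sqrt_pos.2 (by positivity)).ne'⟩
    exact prob_twoTwoFree_le hN
  · exact isCoboundedUnder_le_of_le atTop fun N => by positivity
end
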